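/- arXiv:2508.20062 — 6 statements merged into one kernel-verified Lean document; each statement's English description precedes it below -/
import Mathlib

section
/- Let X be a nonempty set, let S be a set of functions X → ℝ ∪ {∞}, and let f be an element of the tropical span ⟨S⟩. Then there exists a finite tropically independent subset S′ ⊆ S such that f belongs to the tropical span ⟨S′⟩. (Lemma "Submodules" of the paper.) -/
/-- The tropical span of a set `S` of functions `X → ℝ ∪ {∞}`: all finite tropical linear
combinations `min_k (φ_k + a_k)` with `φ_k ∈ S`, `a_k ∈ ℝ ∪ {∞}` (the empty combination is the
constant function `∞`). -/
noncomputable def tropSpan {X : Type*} (S : Set (X → WithTop ℝ)) : Set (X → WithTop ℝ) :=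
  { f | ∃ (n : ℕ) (φ : Fin n → (X → WithTop ℝ)) (a : Fin n → WithTop ℝ),
      (∀ k, φ k ∈ S) ∧ f = fun x => Finset.univ.inf (fun k => φ k x + a k) }

/-- A finite set `T` of functions `X → ℝ ∪ {∞}` is tropically dependent if there are real
numbers `a_f` (for `f ∈ T`) such that at every point `x` the minimum `min_{f ∈ T} (f x + a_f)`
is attained by at least two distinct elements of `T`. -/
def TropicallyDependent {X : Type*} (T : Finset (X → WithTop ℝ)) : Prop :=
  ∃ a : (X → WithTop ℝ) → ℝ, ∀ x : X, ∃ f ∈ T, ∃ g ∈ T, f ≠ g ∧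
    f x + (a f : WithTop ℝ) = T.inf (fun h => h x + (a h : WithTop ℝ)) ∧
    g x + (a g : WithTop ℝ) = T.inf (fun h => h x + (a h : WithTop ℝ))

/-- A finite set of functions `X → ℝ ∪ {∞}`, none identically `∞`, is tropically independent
if it is not tropically dependent. -/
def TropicallyIndependent {X : Type*} (T : Finset (X → WithTop ℝ)) : Prop :=
  (∀ f ∈ T, f ≠ (⊤ : X → WithTop ℝ)) ∧ ¬ TropicallyDependent T

/-- Any "finset form" combination lies in the tropical span of the underlying finset. -/
private lemma inf_form_mem_tropSpan {X : Type*} (T : Finset (X → WithTop ℝ))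
    (b : (X → WithTop ℝ) → WithTop ℝ) :
    (fun x => T.inf (fun g => g x + b g)) ∈ tropSpan (↑T : Set (X → WithTop ℝ)) := by
  refine ⟨T.card, fun k => (T.equivFin.symm k : X → WithTop ℝ),
    fun k => b (T.equivFin.symm k : X → WithTop ℝ), fun k => (T.equivFin.symm k).2, ?_⟩
  funext x
  have h1 : T.inf (fun g => g x + b g)
      = (Finset.univ : Finset {g // g ∈ T}).inf (fun g => (g : X → WithTop ℝ) x + b g) := by
    rw [Finset.univ_eq_attach]
    exact (Finset.inf_attach T (fun g => g x + b g)).symm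
  rw [h1, ← Finset.map_univ_equiv T.equivFin.symm, Finset.inf_map]
  rfl

/-- If the `g0`-term is everywhere dominated by the rest, `g0` can be erased. -/
private lemma inf_erase_eq {X : Type*} (T : Finset (X → WithTop ℝ))
    (b : (X → WithTop ℝ) → WithTop ℝ) (g0 : X → WithTop ℝ) [DecidableEq (X → WithTop ℝ)]
    (h : ∀ x, (T.erase g0).inf (fun g => g x + b g) ≤ g0 x + b g0) (x : X) :
    T.inf (fun g => g x + b g) = (T.erase g0).inf (fun g => g x + b g) := by
  refine le_antisymm (Finset.inf_mono (Finset.erase_subset _ _)) ?_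
  refine Finset.le_inf fun g hg => ?_
  rcases eq_or_ne g g0 with rfl | hne
  · exact h x
  · exact Finset.inf_le (Finset.mem_erase.2 ⟨hne, hg⟩)

private lemma main_aux {X : Type*} [Nonempty X] :
    ∀ (n : ℕ) (T : Finset (X → WithTop ℝ)) (b : (X → WithTop ℝ) → WithTop ℝ),
    T.card ≤ n →
    ∃ T' : Finset (X → WithTop ℝ), T' ⊆ T ∧ TropicallyIndependent T' ∧
      (fun x => T.inf (fun g => g x + b g)) ∈ tropSpan (↑T' : Set (X → WithTop ℝ)) := by
  classical
  intro n
  induction n with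
  | zero =>
    intro T b hcard
    have hT : T = ∅ := Finset.card_eq_zero.mp (Nat.le_zero.mp hcard)
    subst hT
    refine ⟨∅, Finset.Subset.refl _, ⟨fun g hg => absurd hg (Finset.notMem_empty g), ?_⟩,
      inf_form_mem_tropSpan ∅ b⟩
    rintro ⟨a, ha⟩
    obtain ⟨x⟩ := ‹Nonempty X›
    obtain ⟨g, hg, -⟩ := ha x
    exact absurd hg (Finset.notMem_empty g)
  | succ n ih =>
    intro T b hcard
    -- helper: if we can erase some g0 ∈ T, recurse
    have erase_case : ∀ g0 ∈ T,
        (∀ x, (T.erase g0).inf (fun g => g x + b g) ≤ g0 x + b g0) →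
        ∃ T' : Finset (X → WithTop ℝ), T' ⊆ T ∧ TropicallyIndependent T' ∧
          (fun x => T.inf (fun g => g x + b g)) ∈ tropSpan (↑T' : Set (X → WithTop ℝ)) := by
      intro g0 hg0 hdom
      have hc : (T.erase g0).card ≤ n := by
        have := Finset.card_erase_of_mem hg0
        omega
      obtain ⟨T', hT'sub, hindep, hmem⟩ := ih (T.erase g0) b hc
      refine ⟨T', hT'sub.trans (Finset.erase_subset _ _), hindep, ?_⟩
      have : (fun x => T.inf (fun g => g x + b g))
          = (fun x => (T.erase g0).inf (fun g => g x + b g)) := by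
        funext x; exact inf_erase_eq T b g0 hdom x
      rw [this]; exact hmem
    by_cases hbtop : ∃ g0 ∈ T, b g0 = ⊤
    · obtain ⟨g0, hg0, hb⟩ := hbtop
      exact erase_case g0 hg0 (fun x => by rw [hb, add_top]; exact le_top)
    by_cases htop : (⊤ : X → WithTop ℝ) ∈ T
    · exact erase_case ⊤ htop (fun x => by
        show _ ≤ (⊤ : WithTop ℝ) + _
        rw [top_add]; exact le_top)
    by_cases hdep : TropicallyDependent T
    · obtain ⟨a, ha⟩ := hdep
      push_neg at hbtop
      -- all coefficients are real
      set c : (X → WithTop ℝ) → ℝ := fun g => (b g).untopD 0 with hc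
      have hbc : ∀ g ∈ T, b g = (c g : WithTop ℝ) := by
        intro g hg
        cases hbg : b g with
        | top => exact absurd hbg (hbtop g hg)
        | coe r => simp [hc, hbg]
      have hTne : T.Nonempty := by
        obtain ⟨x⟩ := ‹Nonempty X›
        obtain ⟨g, hg, -⟩ := ha x
        exact ⟨g, hg⟩
      obtain ⟨g0, hg0, hmax⟩ := Finset.exists_max_image T (fun g => c g - a g) hTne
      refine erase_case g0 hg0 fun x => ?_
      -- find an attainer h0 ≠ g0 of the dependence minimum
      obtain ⟨f1, hf1, g1, hg1, hne, hfeq, hgeq⟩ := ha x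
      obtain ⟨h0, hh0, hh0ne, hh0eq⟩ :
          ∃ h0 ∈ T, h0 ≠ g0 ∧
            h0 x + (a h0 : WithTop ℝ) = T.inf (fun h => h x + (a h : WithTop ℝ)) := by
        rcases eq_or_ne f1 g0 with rfl | h
        · exact ⟨g1, hg1, fun hh => hne hh.symm, hgeq⟩
        · exact ⟨f1, hf1, h, hfeq⟩
      have hmin : h0 x + (a h0 : WithTop ℝ) ≤ g0 x + (a g0 : WithTop ℝ) := by
        rw [hh0eq]; exact Finset.inf_le hg0
      have key : h0 x + (c h0 : WithTop ℝ) ≤ g0 x + (c g0 : WithTop ℝ) := by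
        rw [← WithTop.add_le_add_iff_right (WithTop.coe_ne_top (a := a g0))]
        have hreal : c h0 + a g0 ≤ a h0 + c g0 := by
          have := hmax h0 hh0; linarith
        calc h0 x + (c h0 : WithTop ℝ) + (a g0 : WithTop ℝ)
            = h0 x + ((c h0 + a g0 : ℝ) : WithTop ℝ) := by
              rw [add_assoc, WithTop.coe_add]
          _ ≤ h0 x + ((a h0 + c g0 : ℝ) : WithTop ℝ) := by
              exact add_le_add_right (WithTop.coe_le_coe.2 hreal) _
          _ = (h0 x + (a h0 : WithTop ℝ)) + (c g0 : WithTop ℝ) := by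
              rw [WithTop.coe_add, add_assoc]
          _ ≤ (g0 x + (a g0 : WithTop ℝ)) + (c g0 : WithTop ℝ) := add_le_add_left hmin _
          _ = g0 x + (c g0 : WithTop ℝ) + (a g0 : WithTop ℝ) := by
              rw [add_assoc, add_assoc, add_comm ((a g0 : WithTop ℝ))]
      have hh0' : h0 ∈ T.erase g0 := Finset.mem_erase.2 ⟨hh0ne, hh0⟩
      calc (T.erase g0).inf (fun g => g x + b g) ≤ h0 x + b h0 := Finset.inf_le hh0'
        _ = h0 x + (c h0 : WithTop ℝ) := by rw [hbc h0 hh0]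
        _ ≤ g0 x + (c g0 : WithTop ℝ) := key
        _ = g0 x + b g0 := by rw [hbc g0 hg0]
    · -- independent
      refine ⟨T, Finset.Subset.refl _, ⟨fun g hg hgtop => htop (hgtop ▸ hg), hdep⟩,
        inf_form_mem_tropSpan T b⟩

/-- Lemma "Submodules": every element of the tropical span of `S` lies in the tropical span
of a finite tropically independent subset of `S`. -/
theorem mem_tropSpan_of_finite_indep {X : Type*} [Nonempty X] (S : Set (X → WithTop ℝ))
    (f : X → WithTop ℝ) (hf : f ∈ tropSpan S) :
    ∃ T : Finset (X → WithTop ℝ), ↑T ⊆ S ∧ TropicallyIndependent T ∧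
      f ∈ tropSpan (↑T : Set (X → WithTop ℝ)) := by
  classical
  obtain ⟨n, φ, a, hφ, hfeq⟩ := hf
  -- convert to finset form
  set T0 : Finset (X → WithTop ℝ) := Finset.univ.image φ with hT0
  set b : (X → WithTop ℝ) → WithTop ℝ :=
    fun g => (Finset.univ.filter (fun k => φ k = g)).inf a with hb
  have hform : ∀ x, Finset.univ.inf (fun k => φ k x + a k)
      = T0.inf (fun g => g x + b g) := by
    intro x
    refine le_antisymm (Finset.le_inf fun g hg => ?_) (Finset.le_inf fun k _ => ?_)
    · obtain ⟨k, -, hk⟩ := Finset.mem_image.1 hg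
      have hne : (Finset.univ.filter (fun k => φ k = g)).Nonempty :=
        ⟨k, Finset.mem_filter.2 ⟨Finset.mem_univ k, hk⟩⟩
      obtain ⟨k0, hk0, hk0eq⟩ := Finset.exists_mem_eq_inf _ hne a
      have hφk0 : φ k0 = g := (Finset.mem_filter.1 hk0).2
      calc Finset.univ.inf (fun k => φ k x + a k) ≤ φ k0 x + a k0 :=
            Finset.inf_le (Finset.mem_univ k0)
        _ = g x + b g := by rw [hφk0, hb, ← hk0eq]
    · have hmem : φ k ∈ T0 := Finset.mem_image_of_mem φ (Finset.mem_univ k)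
      have hble : b (φ k) ≤ a k :=
        Finset.inf_le (Finset.mem_filter.2 ⟨Finset.mem_univ k, rfl⟩)
      calc T0.inf (fun g => g x + b g) ≤ φ k x + b (φ k) := Finset.inf_le hmem
        _ ≤ φ k x + a k := add_le_add_right hble _
  have hfeq' : f = fun x => T0.inf (fun g => g x + b g) := by
    rw [hfeq]; funext x; exact hform x
  obtain ⟨T, hTsub, hindep, hmem⟩ := main_aux T0.card T0 b le_rfl
  refine ⟨T, ?_, hindep, ?_⟩
  · intro g hg
    obtain ⟨k, -, hk⟩ := Finset.mem_image.1 (hTsub hg)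
    exact hk ▸ hφ k
  · rw [hfeq']; exact hmem
end

section
/- Let E be a finite set, let r ≥ 1 be a natural number with r ≤ |E|, and let 𝓕 be a collection of proper subsets of E such that: (i) 𝓕 is closed under pairwise intersection (F, G ∈ 𝓕 implies F ∩ G ∈ 𝓕); (ii) 0 < ℓ(𝓕) ≤ r; and (iii) every subset S ⊆ E with |S| = r is contained in some member of 𝓕. Then there exists a matroid on ground set E of rank r + 1 whose collection of flats is exactly 𝓕 ∪ {E}. (The paper's cryptomorphic characterization of lattices of flats, Proposition "matroid lemma".) -/
open Set

namespace ExistsMatroidFlatsAux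

variable {α : Type*} [Fintype α] {F : Set (Set α)}

/-- The family with the ground set adjoined. -/
def L (F : Set (Set α)) : Set (Set α) := F ∪ {Set.univ}

lemma univ_mem_L (F : Set (Set α)) : (Set.univ : Set α) ∈ L F := Or.inr rfl

lemma mem_F_of_mem_L {A : Set α} (hA : A ∈ L F) (h : A ≠ Set.univ) : A ∈ F :=
  hA.resolve_right h

lemma sInter_mem {S : Set (Set α)} (hne : S.Nonempty)
    (hS : ∀ a ∈ S, ∀ b ∈ S, a ∩ b ∈ S) : ⋂₀ S ∈ S := by
  obtain ⟨m, hm, hmin⟩ := Set.Finite.exists_minimalFor id S S.toFinite hne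
  have hle : ∀ a ∈ S, m ⊆ a := by
    intro a ha
    have h1 : m ∩ a ∈ S := hS m hm a ha
    exact (hmin h1 inter_subset_left).trans inter_subset_right
  have : ⋂₀ S = m := (sInter_subset_of_mem hm).antisymm (subset_sInter hle)
  rw [this]; exact hm

/-- closure operator of the family -/
def mcl (F : Set (Set α)) (X : Set α) : Set α := ⋂₀ {A | A ∈ L F ∧ X ⊆ A}

lemma subset_mcl (F : Set (Set α)) (X : Set α) : X ⊆ mcl F X :=
  fun _ hx => mem_sInter.2 fun _ hA => hA.2 hx

lemma mcl_subset {A : Set α} (hA : A ∈ L F) {X : Set α} (hXA : X ⊆ A) : mcl F X ⊆ A :=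
  sInter_subset_of_mem ⟨hA, hXA⟩

lemma mcl_mono {X Y : Set α} (h : X ⊆ Y) : mcl F X ⊆ mcl F Y :=
  sInter_subset_sInter fun _ hA => ⟨hA.1, h.trans hA.2⟩

lemma L_inter (hinter : ∀ A ∈ F, ∀ B ∈ F, A ∩ B ∈ F) :
    ∀ A ∈ L F, ∀ B ∈ L F, A ∩ B ∈ L F := by
  rintro A (hA | hA) B (hB | hB)
  · exact Or.inl (hinter A hA B hB)
  · simp only [mem_singleton_iff] at hB; subst hB; rw [inter_univ]; exact Or.inl hA
  · simp only [mem_singleton_iff] at hA; subst hA; rw [univ_inter]; exact Or.inl hB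
  · simp only [mem_singleton_iff] at hA hB; subst hA; subst hB
    simpa using univ_mem_L F

lemma mcl_mem (hinter : ∀ A ∈ F, ∀ B ∈ F, A ∩ B ∈ F) (X : Set α) : mcl F X ∈ L F := by
  have h := sInter_mem (S := {A | A ∈ L F ∧ X ⊆ A})
    ⟨Set.univ, univ_mem_L F, subset_univ X⟩
    (fun a ha b hb => ⟨L_inter hinter a ha.1 b hb.1, subset_inter ha.2 hb.2⟩)
  exact h.1

lemma mcl_of_mem {A : Set α} (hA : A ∈ L F) : mcl F A = A :=
  (mcl_subset hA Subset.rfl).antisymm (subset_mcl F A)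

lemma mcl_mcl_union (hinter : ∀ A ∈ F, ∀ B ∈ F, A ∩ B ∈ F) (X Y : Set α) :
    mcl F (mcl F X ∪ Y) = mcl F (X ∪ Y) := by
  apply subset_antisymm
  · exact mcl_subset (mcl_mem hinter _)
      (union_subset (mcl_mono subset_union_left)
        (subset_union_right.trans (subset_mcl F (X ∪ Y))))
  · exact mcl_mono (union_subset_union_left Y (subset_mcl F X))

lemma mcl_insert_mcl (hinter : ∀ A ∈ F, ∀ B ∈ F, A ∩ B ∈ F) (X : Set α) (e : α) :
    mcl F (insert e (mcl F X)) = mcl F (insert e X) := by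
  rw [← union_singleton, ← union_singleton (s := X), mcl_mcl_union hinter]

end ExistsMatroidFlatsAux
set_option linter.unusedSectionVars false

open Set

namespace ExistsMatroidFlatsAux2
open ExistsMatroidFlatsAux

variable {α : Type*} [Fintype α] {F : Set (Set α)}

/-- Build a set of generators together with a chain of flats below a flat `A`. -/
lemma down (hinter : ∀ A ∈ F, ∀ B ∈ F, A ∩ B ∈ F) :
    ∀ (n : ℕ) (A : Set α), A.ncard ≤ n → A ∈ L F →
    ∃ (s : Finset α) (l : List (Set α)), ↑s ⊆ A ∧ mcl F ↑s = A ∧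
      (∀ B ∈ l, B ∈ L F ∧ B ⊆ A) ∧ l.Pairwise (· ⊂ ·) ∧ l.length = s.card + 1 := by
  classical
  have base : ∀ (A : Set α), A ∈ L F → ¬ (∃ G ∈ L F, G ⊂ A) →
      ∃ (s : Finset α) (l : List (Set α)), ↑s ⊆ A ∧ mcl F ↑s = A ∧
      (∀ B ∈ l, B ∈ L F ∧ B ⊆ A) ∧ l.Pairwise (· ⊂ ·) ∧ l.length = s.card + 1 := by
    intro A hA hex
    have hcl : mcl F (↑(∅ : Finset α)) = A := by
      have h1 : mcl F ∅ ⊆ A := mcl_subset hA (empty_subset A)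
      rcases h1.ssubset_or_eq with h2 | h2
      · exact absurd ⟨_, mcl_mem hinter ∅, h2⟩ hex
      · simpa using h2
    exact ⟨∅, [A], by simp, hcl, by simp [hA], by simp, by simp⟩
  intro n
  induction n with
  | zero =>
    intro A hcard hA
    refine base A hA ?_
    rintro ⟨G, -, hG⟩
    have := Set.ncard_lt_ncard hG A.toFinite
    omega
  | succ n ih =>
    intro A hcard hA
    by_cases hex : ∃ G ∈ L F, G ⊂ A
    swap
    · exact base A hA hex
    obtain ⟨G, ⟨hGL, hGA⟩, hmax⟩ :=
      Set.Finite.exists_maximalFor id {G | G ∈ L F ∧ G ⊂ A} (Set.toFinite _)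
        (by obtain ⟨G, h1, h2⟩ := hex; exact ⟨G, h1, h2⟩)
    have hGn : G.ncard ≤ n := by
      have := Set.ncard_lt_ncard hGA A.toFinite
      omega
    obtain ⟨s', l', hs'A, hs'cl, hl'mem, hl'pw, hl'len⟩ := ih G hGn hGL
    obtain ⟨e, heA, heG⟩ := exists_of_ssubset hGA
    have hsub : (↑(insert e s') : Set α) ⊆ A := by
      rw [Finset.coe_insert]
      exact insert_subset heA (hs'A.trans hGA.subset)
    have heX : mcl F ↑(insert e s') = A := by
      have hXL : mcl F ↑(insert e s') ∈ L F := mcl_mem hinter _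
      have hGX : G ⊆ mcl F ↑(insert e s') := by
        rw [← hs'cl]
        exact mcl_mono (by rw [Finset.coe_insert]; exact subset_insert _ _)
      have heX' : e ∈ mcl F ↑(insert e s') :=
        subset_mcl _ _ (by simp)
      have hXA : mcl F ↑(insert e s') ⊆ A := mcl_subset hA hsub
      rcases hXA.ssubset_or_eq with h | h
      · have hGeq : G = mcl F ↑(insert e s') := hGX.antisymm (hmax ⟨hXL, h⟩ hGX)
        exact absurd (by rw [hGeq]; exact heX') heG
      · exact h
    have hes' : e ∉ s' := fun h => heG (hs'A (by exact_mod_cast Finset.mem_coe.2 h))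
    refine ⟨insert e s', l' ++ [A], hsub, heX, ?_, ?_, ?_⟩
    · intro B hB
      rcases List.mem_append.1 hB with h | h
      · exact ⟨(hl'mem B h).1, (hl'mem B h).2.trans hGA.subset⟩
      · simp only [List.mem_singleton] at h; subst h; exact ⟨hA, Subset.rfl⟩
    · refine List.pairwise_append.2 ⟨hl'pw, by simp, ?_⟩
      intro x hx y hy
      simp only [List.mem_singleton] at hy; subst hy
      exact ssubset_of_subset_of_ssubset (hl'mem x hx).2 hGA
    · simp [hl'len, Finset.card_insert_of_notMem hes']

/-- Build a set of generators together with a chain of proper flats from `B` up to the ground. -/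
lemma up (hinter : ∀ A ∈ F, ∀ B ∈ F, A ∩ B ∈ F) :
    ∀ (n : ℕ) (B : Set α), Bᶜ.ncard ≤ n → B ∈ L F →
    ∃ (t : Finset α) (l : List (Set α)), (∀ x ∈ t, x ∉ B) ∧ mcl F (B ∪ ↑t) = Set.univ ∧
      (∀ X ∈ l, X ∈ F ∧ B ⊆ X) ∧ l.Pairwise (· ⊂ ·) ∧ l.length = t.card := by
  classical
  have base : ∀ (B : Set α), B = Set.univ →
      ∃ (t : Finset α) (l : List (Set α)), (∀ x ∈ t, x ∉ B) ∧ mcl F (B ∪ ↑t) = Set.univ ∧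
      (∀ X ∈ l, X ∈ F ∧ B ⊆ X) ∧ l.Pairwise (· ⊂ ·) ∧ l.length = t.card := by
    rintro B rfl
    refine ⟨∅, [], by simp, ?_, by simp, by simp, by simp⟩
    simpa using mcl_of_mem (univ_mem_L F)
  intro n
  induction n with
  | zero =>
    intro B hcard hB
    refine base B ?_
    have : Bᶜ = ∅ := by
      have := Bᶜ.toFinite
      rw [← Set.ncard_eq_zero this]; omega
    rwa [compl_empty_iff] at this
  | succ n ih =>
    intro B hcard hB
    by_cases hBu : B = Set.univ
    · exact base B hBu
    obtain ⟨D, ⟨hDL, hBD⟩, hmin⟩ :=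
      Set.Finite.exists_minimalFor id {D | D ∈ L F ∧ B ⊂ D} (Set.toFinite _)
        ⟨Set.univ, univ_mem_L F, ssubset_univ_iff.2 hBu⟩
    obtain ⟨e, heD, heB⟩ := exists_of_ssubset hBD
    have hDe : mcl F (insert e B) = D := by
      have hXD : mcl F (insert e B) ⊆ D :=
        mcl_subset hDL (insert_subset heD hBD.subset)
      have hBX : B ⊂ mcl F (insert e B) :=
        ssubset_of_ssubset_of_subset
          (ssubset_insert heB) (subset_mcl F _)
      exact hXD.antisymm (hmin ⟨mcl_mem hinter _, hBX⟩ hXD)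
    have hDn : Dᶜ.ncard ≤ n := by
      have hss : Dᶜ ⊂ Bᶜ := by
        refine (Set.ssubset_iff_of_subset (compl_subset_compl.mpr hBD.subset)).2 ?_
        exact ⟨e, heB, by simpa using heD⟩
      have := Set.ncard_lt_ncard hss Bᶜ.toFinite
      omega
    obtain ⟨t', l', ht'D, ht'cl, hl'mem, hl'pw, hl'len⟩ := ih D hDn hDL
    have het' : e ∉ t' := fun h => ht'D e h heD
    refine ⟨insert e t', B :: l', ?_, ?_, ?_, ?_, ?_⟩
    · intro x hx
      rcases Finset.mem_insert.1 hx with rfl | hx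
      · exact heB
      · exact fun hxB => ht'D x hx (hBD.subset hxB)
    · have h1 : B ∪ ↑(insert e t') = insert e B ∪ ↑t' := by
        rw [Finset.coe_insert, Set.union_insert, Set.insert_union]
      rw [h1, ← mcl_mcl_union hinter, hDe, ht'cl]
    · intro X hX
      rcases List.mem_cons.1 hX with rfl | hX
      · exact ⟨mem_F_of_mem_L hB hBu, Subset.rfl⟩
      · exact ⟨(hl'mem X hX).1, hBD.subset.trans (hl'mem X hX).2⟩
    · exact List.pairwise_cons.2
        ⟨fun X hX => ssubset_of_ssubset_of_subset hBD (hl'mem X hX).2, hl'pw⟩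
    · simp [hl'len, Finset.card_insert_of_notMem het']

/-- chains of members of `F` have length at most `r + 1`. -/
lemma chain_bound {r : ℕ}
    (hlen_le : ∀ (k : ℕ) (C : Fin (k + 1) → Set α), (∀ i, C i ∈ F) → StrictMono C → k ≤ r)
    {l : List (Set α)} (hmem : ∀ X ∈ l, X ∈ F) (hp : l.Pairwise (· ⊂ ·)) :
    l.length ≤ r + 1 := by
  cases l with
  | nil => simp
  | cons a l' =>
    have hcast : l'.length + 1 = (a :: l').length := (List.length_cons).symm
    have hk : l'.length ≤ r := by
      refine hlen_le l'.length (fun i => (a :: l').get (Fin.cast hcast i)) ?_ ?_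
      · intro i; exact hmem _ (List.get_mem _ _)
      · intro i j hij
        have hij' : Fin.cast hcast i < Fin.cast hcast j := hij
        exact Set.lt_iff_ssubset.2 (List.pairwise_iff_get.1 hp _ _ hij')
    rw [List.length_cons]; omega

variable {α : Type*} [Fintype α] {F : Set (Set α)} {r : ℕ}

/-- Key covering lemma: there is no flat strictly between a flat `A` and the closure of
`A` with one extra point. -/
lemma covering (hrcard : r ≤ Fintype.card α)
    (hproper : ∀ A ∈ F, A ⊂ Set.univ)
    (hinter : ∀ A ∈ F, ∀ B ∈ F, A ∩ B ∈ F)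
    (hlen_le : ∀ (k : ℕ) (C : Fin (k + 1) → Set α), (∀ i, C i ∈ F) → StrictMono C → k ≤ r)
    (hcover : ∀ S : Finset α, S.card = r → ∃ A ∈ F, ↑S ⊆ A)
    {A : Set α} (hA : A ∈ L F) {e : α} (he : e ∉ A)
    {D : Set α} (hD : D ∈ L F) (hAD : A ⊂ D) (hDB : D ⊆ mcl F (insert e A)) :
    D = mcl F (insert e A) := by
  classical
  by_contra hne
  have hDBs : D ⊂ mcl F (insert e A) := hDB.ssubset_of_ne hne
  set B := mcl F (insert e A) with hBdef
  have hBL : B ∈ L F := mcl_mem hinter _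
  obtain ⟨s, ldown, hsA, hscl, hldmem, hldpw, hldlen⟩ := down hinter A.ncard A le_rfl hA
  obtain ⟨t, lup, htB, htcl, humem, hupw, hulen⟩ := up hinter Bᶜ.ncard B le_rfl hBL
  have h1 : mcl F (insert e ↑s) = B := by
    rw [← mcl_insert_mcl hinter, hscl]
  have hgen : mcl F ↑(insert e s ∪ t) = Set.univ := by
    have h2 : (↑(insert e s ∪ t) : Set α) = insert e ↑s ∪ ↑t := by
      push_cast; rfl
    rw [h2, ← mcl_mcl_union hinter, h1, htcl]
  have hcard : r + 1 ≤ s.card + 1 + t.card := by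
    by_contra hlt
    push_neg at hlt
    have hc1 : (insert e s ∪ t).card ≤ r := by
      have := Finset.card_union_le (insert e s) t
      have := Finset.card_insert_le e s
      omega
    obtain ⟨S, hSsub, hScard⟩ := Finset.exists_superset_card_eq hc1 hrcard
    obtain ⟨A', hA', hSA'⟩ := hcover S hScard
    have huniv : Set.univ ⊆ A' := by
      rw [← hgen]
      exact mcl_subset (Or.inl hA') ((Finset.coe_subset.2 hSsub).trans hSA')
    exact (hproper A' hA').ne (univ_subset_iff.1 huniv)
  have hAne : A ≠ Set.univ := fun h => he (h ▸ mem_univ e)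
  have hDne : D ≠ Set.univ := by
    intro h
    exact hDBs.not_subset (h ▸ subset_univ B)
  set l := ldown ++ D :: lup with hl
  have hlmem : ∀ X ∈ l, X ∈ F := by
    intro X hX
    rcases List.mem_append.1 hX with h | h
    · refine mem_F_of_mem_L (hldmem X h).1 ?_
      intro hXu
      exact hAne (univ_subset_iff.1 (hXu ▸ (hldmem X h).2))
    · rcases List.mem_cons.1 h with rfl | h
      · exact mem_F_of_mem_L hD hDne
      · exact (humem X h).1
  have hlpw : l.Pairwise (· ⊂ ·) := by
    refine List.pairwise_append.2 ⟨hldpw, ?_, ?_⟩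
    · exact List.pairwise_cons.2
        ⟨fun X hX => ssubset_of_ssubset_of_subset hDBs (humem X hX).2, hupw⟩
    · intro x hx y hy
      have hxD : x ⊂ D := ssubset_of_subset_of_ssubset (hldmem x hx).2 hAD
      rcases List.mem_cons.1 hy with rfl | hy
      · exact hxD
      · exact hxD.trans (ssubset_of_ssubset_of_subset hDBs (humem y hy).2)
  have hbound := chain_bound hlen_le hlmem hlpw
  rw [hl] at hbound
  simp only [List.length_append, List.length_cons, hldlen, hulen] at hbound
  omega

/-- MacLane–Steinitz exchange for `mcl`. -/
lemma exchange (hrcard : r ≤ Fintype.card α)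
    (hproper : ∀ A ∈ F, A ⊂ Set.univ)
    (hinter : ∀ A ∈ F, ∀ B ∈ F, A ∩ B ∈ F)
    (hlen_le : ∀ (k : ℕ) (C : Fin (k + 1) → Set α), (∀ i, C i ∈ F) → StrictMono C → k ≤ r)
    (hcover : ∀ S : Finset α, S.card = r → ∃ A ∈ F, ↑S ⊆ A)
    {X : Set α} {e f : α} (hf : f ∉ mcl F X) (hfe : f ∈ mcl F (insert e X)) :
    e ∈ mcl F (insert f X) := by
  set A := mcl F X with hAdef
  have hAL : A ∈ L F := mcl_mem hinter X
  have heA : e ∉ A := by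
    intro heA
    exact hf (mcl_subset hAL (insert_subset heA (subset_mcl F X)) hfe)
  have hB : mcl F (insert e A) = mcl F (insert e X) := mcl_insert_mcl hinter X e
  have hfB : f ∈ mcl F (insert e A) := by rw [hB]; exact hfe
  have hAD : A ⊂ mcl F (insert f A) := by
    refine ssubset_of_ssubset_of_subset (ssubset_insert ?_) (subset_mcl F _)
    exact hf
  have hDB : mcl F (insert f A) ⊆ mcl F (insert e A) :=
    mcl_subset (mcl_mem hinter _) (insert_subset hfB
      ((subset_insert e A).trans (subset_mcl F _)))
  have hcov := covering hrcard hproper hinter hlen_le hcover hAL heA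
    (mcl_mem hinter (insert f A)) hAD hDB
  have h2 : mcl F (insert f X) = mcl F (insert f A) := (mcl_insert_mcl hinter X f).symm
  rw [h2, hcov]
  exact subset_mcl F _ (mem_insert e A)

/-- Independence predicate associated with the closure `mcl`. -/
def mInd (F : Set (Set α)) (I : Set α) : Prop := ∀ e ∈ I, e ∉ mcl F (I \ {e})

lemma mInd_empty : mInd F (∅ : Set α) := fun e he => absurd he (notMem_empty e)

lemma mInd_subset {I J : Set α} (hJ : mInd F J) (hIJ : I ⊆ J) : mInd F I :=
  fun e he hecl => hJ e (hIJ he) (mcl_mono (diff_subset_diff_left hIJ) hecl)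

variable (hrcard : r ≤ Fintype.card α)
    (hproper : ∀ A ∈ F, A ⊂ Set.univ)
    (hinter : ∀ A ∈ F, ∀ B ∈ F, A ∩ B ∈ F)
    (hlen_le : ∀ (k : ℕ) (C : Fin (k + 1) → Set α), (∀ i, C i ∈ F) → StrictMono C → k ≤ r)
    (hcover : ∀ S : Finset α, S.card = r → ∃ A ∈ F, ↑S ⊆ A)

include hrcard hproper hinter hlen_le hcover in
lemma mInd_insert {I : Set α} (hI : mInd F I) {e : α} (he : e ∉ mcl F I) :
    mInd F (insert e I) := by
  have heI : e ∉ I := fun h => he (subset_mcl F I h)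
  intro x hx
  rcases eq_or_ne x e with rfl | hxe
  · rw [insert_diff_self_of_notMem heI]
    exact he
  have hxI : x ∈ I := (mem_insert_iff.1 hx).resolve_left hxe
  intro hxcl
  have h1 : insert e I \ {x} = insert e (I \ {x}) :=
    insert_diff_of_notMem _ (by simpa using hxe.symm)
  rw [h1] at hxcl
  have h2 : x ∉ mcl F (I \ {x}) := hI x hxI
  have h3 := exchange hrcard hproper hinter hlen_le hcover h2 hxcl
  rw [insert_diff_singleton, insert_eq_of_mem hxI] at h3
  exact he h3

include hrcard hproper hinter hlen_le hcover in
lemma mem_mcl_of_not_ind {I : Set α} {e : α} (hI : mInd F I) (heI : e ∉ I)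
    (hne : ¬ mInd F (insert e I)) : e ∈ mcl F I := by
  by_contra h
  exact hne (mInd_insert hrcard hproper hinter hlen_le hcover hI h)

include hrcard hproper hinter hlen_le hcover in
lemma steinitz :
    ∀ (n : ℕ) (I J : Set α), (J \ I).ncard ≤ n → mInd F J → J ⊆ mcl F I →
      J.ncard ≤ I.ncard := by
  intro n
  induction n with
  | zero =>
    intro I J h hJ hJI
    have h0 : (J \ I).ncard = 0 := le_antisymm h (Nat.zero_le _)
    have : J \ I = ∅ := (Set.ncard_eq_zero (J \ I).toFinite).1 h0
    exact Set.ncard_le_ncard (diff_eq_empty.1 this) I.toFinite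
  | succ n ih =>
    intro I J hn hJ hJI
    by_cases hsub : J ⊆ I
    · exact Set.ncard_le_ncard hsub I.toFinite
    obtain ⟨x, hxJ, hxI⟩ := not_subset.1 hsub
    have h𝒮ne : (I \ J) ∈ {S : Set α | S ⊆ I \ J ∧ x ∈ mcl F ((J ∩ I) ∪ S)} := by
      refine ⟨Subset.rfl, ?_⟩
      rw [inter_comm, Set.inter_union_diff]
      exact hJI hxJ
    obtain ⟨S, hS𝒮, hSmin⟩ := Set.Finite.exists_minimalFor Set.ncard
      {S : Set α | S ⊆ I \ J ∧ x ∈ mcl F ((J ∩ I) ∪ S)} (Set.toFinite _) ⟨_, h𝒮ne⟩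
    obtain ⟨hSsub, hxS⟩ := hS𝒮
    have hSne : S.Nonempty := by
      rcases S.eq_empty_or_nonempty with rfl | h
      · exfalso
        rw [union_empty] at hxS
        have : J ∩ I ⊆ J \ {x} := fun z hz => ⟨hz.1, fun h => hxI (h ▸ hz.2)⟩
        exact hJ x hxJ (mcl_mono this hxS)
      · exact h
    obtain ⟨y, hyS⟩ := hSne
    have hymin : x ∉ mcl F ((J ∩ I) ∪ (S \ {y})) := by
      intro hmem
      have hT : S \ {y} ∈ {S : Set α | S ⊆ I \ J ∧ x ∈ mcl F ((J ∩ I) ∪ S)} :=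
        ⟨diff_subset.trans hSsub, hmem⟩
      have hlt : (S \ {y}).ncard < S.ncard :=
        Set.ncard_diff_singleton_lt_of_mem hyS S.toFinite
      have := hSmin hT hlt.le
      omega
    have hxmem : x ∈ mcl F (insert y ((J ∩ I) ∪ (S \ {y}))) := by
      have : insert y ((J ∩ I) ∪ (S \ {y})) = (J ∩ I) ∪ S := by
        rw [← union_insert, insert_diff_singleton, insert_eq_of_mem hyS]
      rw [this]
      exact hxS
    have hexch : y ∈ mcl F (insert x ((J ∩ I) ∪ (S \ {y}))) :=
      exchange hrcard hproper hinter hlen_le hcover hymin hxmem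
    have hyI : y ∈ I := (hSsub hyS).1
    have hyJ : y ∉ J := (hSsub hyS).2
    have hsubI' : insert x ((J ∩ I) ∪ (S \ {y})) ⊆ insert x (I \ {y}) := by
      rintro z (rfl | hz | hz)
      · exact mem_insert _ _
      · exact mem_insert_of_mem _ ⟨hz.2, fun h => hyJ (h ▸ hz.1)⟩
      · exact mem_insert_of_mem _ ⟨(hSsub hz.1).1, hz.2⟩
    have hyI' : y ∈ mcl F (insert x (I \ {y})) := mcl_mono hsubI' hexch
    have hII' : I ⊆ mcl F (insert x (I \ {y})) := by
      intro z hz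
      rcases eq_or_ne z y with rfl | hzy
      · exact hyI'
      · exact subset_mcl F _ (mem_insert_of_mem _ ⟨hz, hzy⟩)
    have hJI' : J ⊆ mcl F (insert x (I \ {y})) := fun z hz =>
      mcl_subset (mcl_mem hinter _) hII' (hJI hz)
    have hxI'' : x ∉ I \ {y} := fun h => hxI h.1
    have hcard' : (insert x (I \ {y})).ncard ≤ I.ncard := by
      rw [Set.ncard_insert_of_notMem hxI'' (I \ {y}).toFinite]
      have := Set.ncard_diff_singleton_add_one hyI I.toFinite
      omega
    have hyJdiff : J \ insert x (I \ {y}) = (J \ I) \ {x} := by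
      ext z
      simp only [mem_diff, mem_insert_iff, mem_singleton_iff, not_or]
      constructor
      · rintro ⟨hzJ, hzx, hz3⟩
        refine ⟨⟨hzJ, fun hzI => ?_⟩, hzx⟩
        have hzy : z = y := by
          by_contra h
          exact hz3 ⟨hzI, h⟩
        exact hyJ (hzy ▸ hzJ)
      · rintro ⟨⟨hzJ, hzI⟩, hzx⟩
        exact ⟨hzJ, hzx, fun h => hzI h.1⟩
    have hlt : (J \ insert x (I \ {y})).ncard ≤ n := by
      rw [hyJdiff]
      have : ((J \ I) \ {x}).ncard < (J \ I).ncard :=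
        Set.ncard_diff_singleton_lt_of_mem ⟨hxJ, hxI⟩ (J \ I).toFinite
      omega
    exact le_trans (ih _ J hlt hJ hJI') hcard'

include hinter in
lemma ind_chain :
    ∀ (n : ℕ) (I : Set α), I.ncard = n → mInd F I →
    ∃ l : List (Set α), (∀ X ∈ l, X ∈ L F ∧ X ⊂ mcl F I) ∧
      l.Pairwise (· ⊂ ·) ∧ l.length = n := by
  intro n
  induction n with
  | zero => exact fun I _ _ => ⟨[], by simp, by simp, rfl⟩
  | succ n ih =>
    intro I hcard hI
    have hne : I.Nonempty := by
      rw [Set.nonempty_iff_ne_empty]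
      rintro rfl
      simp at hcard
    obtain ⟨e, he⟩ := hne
    have h1 : (I \ {e}).ncard = n := by
      have := Set.ncard_diff_singleton_add_one he I.toFinite
      omega
    obtain ⟨l', hmem', hpw', hlen'⟩ := ih (I \ {e}) h1 (mInd_subset hI diff_subset)
    have hss : mcl F (I \ {e}) ⊂ mcl F I := by
      refine (mcl_mono diff_subset).ssubset_of_ne ?_
      intro h
      exact hI e he (by rw [h]; exact subset_mcl F I he)
    refine ⟨l' ++ [mcl F (I \ {e})], ?_, ?_, by simp [hlen']⟩
    · intro X hX
      rcases List.mem_append.1 hX with h | h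
      · exact ⟨(hmem' X h).1, (hmem' X h).2.trans hss⟩
      · simp only [List.mem_singleton] at h; subst h
        exact ⟨mcl_mem hinter _, hss⟩
    · refine List.pairwise_append.2 ⟨hpw', by simp, ?_⟩
      intro x hx y hy
      simp only [List.mem_singleton] at hy; subst hy
      exact (hmem' x hx).2
end ExistsMatroidFlatsAux2

open ExistsMatroidFlatsAux ExistsMatroidFlatsAux2

/-- Cryptomorphic characterization of lattices of flats (Proposition "matroid lemma"):
if `𝓕` is a collection of proper subsets of a finite set `E`, closed under pairwise
intersection, whose chains of strict inclusions have lengths between 1 and `r`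
(`0 < ℓ(𝓕) ≤ r`), and every `r`-element subset of `E` is contained in a member of `𝓕`,
then `𝓕 ∪ {E}` is the collection of flats of a matroid on `E` of rank `r + 1`. -/
theorem exists_matroid_flats_eq {α : Type*} [Fintype α] (r : ℕ) (hr : 1 ≤ r)
    (hrcard : r ≤ Fintype.card α) (F : Set (Set α))
    (hproper : ∀ A ∈ F, A ⊂ Set.univ)
    (hinter : ∀ A ∈ F, ∀ B ∈ F, A ∩ B ∈ F)
    (hlen_pos : ∃ A ∈ F, ∃ B ∈ F, A ⊂ B)
    (hlen_le : ∀ (k : ℕ) (C : Fin (k + 1) → Set α), (∀ i, C i ∈ F) → StrictMono C → k ≤ r)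
    (hcover : ∀ S : Finset α, S.card = r → ∃ A ∈ F, ↑S ⊆ A) :
    ∃ M : Matroid α, M.E = Set.univ ∧ (∀ B, M.IsBase B → B.ncard = r + 1) ∧
      (∀ A : Set α, M.IsFlat A ↔ A ∈ F ∪ {Set.univ}) := by
  classical
  set M : Matroid α := (IndepMatroid.ofFinite (E := (Set.univ : Set α)) Set.finite_univ
    (mInd F) mInd_empty (fun I J hJ hIJ => mInd_subset hJ hIJ)
    (by
      intro I J hI hJ hlt
      by_contra hcon
      push_neg at hcon
      have hJcl : J ⊆ mcl F I := by
        intro z hz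
        by_cases hzI : z ∈ I
        · exact subset_mcl F I hzI
        · exact mem_mcl_of_not_ind hrcard hproper hinter hlen_le hcover hI hzI
            (hcon z hz hzI)
      have := steinitz hrcard hproper hinter hlen_le hcover (J \ I).ncard I J le_rfl hJ hJcl
      omega)
    (fun I _ => Set.subset_univ I)).matroid with hMdef
  have hME : M.E = Set.univ := rfl
  have hMI : ∀ I : Set α, M.Indep I ↔ mInd F I := by
    intro I
    rw [hMdef, IndepMatroid.matroid_indep_iff, IndepMatroid.ofFinite_indep]
  have hclosure : ∀ X : Set α, M.closure X = mcl F X := by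
    intro X
    obtain ⟨I, hI⟩ := M.exists_isBasis X (by rw [hME]; exact Set.subset_univ X)
    have hIind : mInd F I := (hMI I).1 hI.indep
    have hXI : X ⊆ mcl F I := by
      intro z hz
      by_cases hzI : z ∈ I
      · exact subset_mcl _ _ hzI
      · have hdep := hI.insert_dep ⟨hz, hzI⟩
        exact mem_mcl_of_not_ind hrcard hproper hinter hlen_le hcover hIind hzI
          (fun h => hdep.not_indep ((hMI _).2 h))
    have hclI : mcl F X = mcl F I :=
      (mcl_subset (mcl_mem hinter I) hXI).antisymm (mcl_mono hI.subset)
    have hMclI : M.closure I = mcl F I := by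
      apply Set.ext
      intro z
      by_cases hzI : z ∈ I
      · simp only [subset_mcl F I hzI, iff_true]
        exact M.mem_closure_of_mem hzI (by rw [hME]; exact Set.subset_univ I)
      · rw [hI.indep.mem_closure_iff_of_notMem hzI]
        constructor
        · intro hdep
          exact mem_mcl_of_not_ind hrcard hproper hinter hlen_le hcover hIind hzI
            (fun h => hdep.not_indep ((hMI _).2 h))
        · intro hmem
          rw [Matroid.dep_iff]
          refine ⟨fun hind => ?_, by rw [hME]; exact Set.subset_univ _⟩
          have h := (hMI _).1 hind z (Set.mem_insert z I)
          rw [Set.insert_diff_self_of_notMem hzI] at h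
          exact h hmem
    rw [← hI.closure_eq_closure, hMclI, hclI]
  refine ⟨M, hME, ?_, ?_⟩
  · intro B hB
    have hBind : mInd F B := (hMI B).1 hB.indep
    have hBcl : mcl F B = Set.univ := by
      rcases eq_or_ne (mcl F B) Set.univ with h | hne
      · exact h
      have hFm : mcl F B ∈ F := mem_F_of_mem_L (mcl_mem hinter B) hne
      obtain ⟨e, -, he⟩ := exists_of_ssubset (hproper _ hFm)
      have heB : e ∉ B := fun h => he (subset_mcl _ _ h)
      have hins : mInd F (insert e B) :=
        mInd_insert hrcard hproper hinter hlen_le hcover hBind he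
      have hdep := hB.insert_dep ⟨by rw [hME]; exact Set.mem_univ e, heB⟩
      exact absurd ((hMI _).2 hins) hdep.not_indep
    obtain ⟨l, hlmem, hlpw, hllen⟩ := ind_chain hinter B.ncard B rfl hBind
    have hub : B.ncard ≤ r + 1 := by
      rw [← hllen]
      refine chain_bound hlen_le ?_ hlpw
      intro X hX
      refine mem_F_of_mem_L (hlmem X hX).1 ?_
      have h2 := (hlmem X hX).2
      rw [hBcl] at h2
      exact h2.ne
    have hlb : r + 1 ≤ B.ncard := by
      by_contra h
      push_neg at h
      have hcard : B.toFinset.card ≤ r := by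
        rw [← Set.ncard_eq_toFinset_card']
        omega
      obtain ⟨S, hBS, hScard⟩ := Finset.exists_superset_card_eq hcard hrcard
      obtain ⟨A', hA', hSA'⟩ := hcover S hScard
      have h1 : mcl F B ⊆ A' :=
        mcl_subset (Or.inl hA') (fun z hz => hSA' (hBS (Set.mem_toFinset.2 hz)))
      rw [hBcl] at h1
      exact (hproper A' hA').ne (Set.univ_subset_iff.1 h1)
    omega
  · intro A
    constructor
    · intro hF
      have h1 := hF.closure
      rw [hclosure] at h1
      rw [← h1]
      exact mcl_mem hinter A
    · intro hA
      refine ⟨fun I X hIA hIX => ?_, by rw [hME]; exact Set.subset_univ A⟩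
      have h1 : X ⊆ M.closure I := hIX.subset_closure
      rwa [hIA.closure_eq_closure, hclosure, mcl_of_mem hA] at h1
end

section
/- Let E be a finite set, let r ≥ 1 be a natural number with r ≤ |E|, and let 𝓕 be a collection of proper subsets of E such that: (i) 𝓕 is closed under pairwise intersection; (ii) 0 < ℓ(𝓕) ≤ r; and (iii) every subset S ⊆ E with |S| = r is contained in some member of 𝓕. Then 𝓕 ∪ {E} has the partition property: for every F ∈ 𝓕, the sets G ∖ F, where G ranges over the minimal members of 𝓕 ∪ {E} strictly containing F, are nonempty, pairwise disjoint, and their union is E ∖ F. (The partition property established in the proof of the paper's Proposition "matroid lemma".) -/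
open Set

section Aux

variable {α : Type*} [Fintype α] [DecidableEq α]

set_option linter.unusedSectionVars false

/-- Closure: intersection of all members of `F ∪ {univ}` containing `S`. -/
private def mlCl (F : Set (Set α)) (S : Set α) : Set α :=
  ⋂₀ {W | W ∈ F ∪ {Set.univ} ∧ S ⊆ W}

private lemma subset_mlCl (F : Set (Set α)) (S : Set α) : S ⊆ mlCl F S :=
  subset_sInter fun _ hW => hW.2

private lemma mlCl_subset (F : Set (Set α)) {S W : Set α} (hW : W ∈ F ∪ {Set.univ})
    (hSW : S ⊆ W) : mlCl F S ⊆ W :=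
  sInter_subset_of_mem ⟨hW, hSW⟩

private lemma mlCl_mono (F : Set (Set α)) {S T : Set α} (h : S ⊆ T) :
    mlCl F S ⊆ mlCl F T :=
  sInter_subset_sInter fun _ hW => ⟨hW.1, h.trans hW.2⟩

private lemma flat_inter {F : Set (Set α)} (hinter : ∀ A ∈ F, ∀ B ∈ F, A ∩ B ∈ F)
    {A B : Set α} (hA : A ∈ F ∪ {Set.univ}) (hB : B ∈ F ∪ {Set.univ}) :
    A ∩ B ∈ F ∪ {Set.univ} := by
  rcases hA with hA | hA
  · rcases hB with hB | hB
    · exact Or.inl (hinter A hA B hB)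
    · rw [mem_singleton_iff] at hB; subst hB; rw [inter_univ]; exact Or.inl hA
  · rw [mem_singleton_iff] at hA; subst hA; rw [univ_inter]; exact hB

private lemma mlCl_mem {F : Set (Set α)} (hinter : ∀ A ∈ F, ∀ B ∈ F, A ∩ B ∈ F)
    (S : Set α) : mlCl F S ∈ F ∪ {Set.univ} := by
  classical
  have key : ∀ u : Finset (Set α), (∀ W ∈ u, W ∈ F ∪ {Set.univ}) →
      ⋂₀ (↑u : Set (Set α)) ∈ F ∪ {Set.univ} := by
    intro u
    induction u using Finset.induction_on with
    | empty => intro _; simp only [Finset.coe_empty, sInter_empty]; exact Or.inr rfl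
    | @insert a s ha ih =>
      intro h
      rw [Finset.coe_insert, sInter_insert]
      exact flat_inter hinter (h a (Finset.mem_insert_self a s))
        (ih fun W hW => h W (Finset.mem_insert_of_mem hW))
  have hfin : {W | W ∈ F ∪ {Set.univ} ∧ S ⊆ W}.Finite := Set.toFinite _
  have heq : mlCl F S = ⋂₀ (↑hfin.toFinset : Set (Set α)) := by
    rw [hfin.coe_toFinset]; rfl
  rw [heq]
  exact key _ fun W hW => ((hfin.mem_toFinset).1 hW).1

variable {r : ℕ} {F : Set (Set α)}

private lemma mlCl_proper (hrcard : r ≤ Fintype.card α)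
    (hproper : ∀ A ∈ F, A ⊂ Set.univ)
    (hcover : ∀ S : Finset α, S.card = r → ∃ A ∈ F, ↑S ⊆ A)
    (S : Finset α) (hS : S.card ≤ r) : mlCl F ↑S ≠ Set.univ := by
  obtain ⟨T, hST, hT⟩ := Finset.exists_superset_card_eq hS hrcard
  obtain ⟨B, hBF, hTB⟩ := hcover T hT
  have h1 : mlCl F ↑S ⊆ B := mlCl_subset F (Or.inl hBF) ((Finset.coe_subset.2 hST).trans hTB)
  intro h
  rw [h] at h1
  exact (hproper B hBF).ne (univ_subset_iff.1 h1)

private lemma mlCl_mem_F (hrcard : r ≤ Fintype.card α)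
    (hproper : ∀ A ∈ F, A ⊂ Set.univ)
    (hinter : ∀ A ∈ F, ∀ B ∈ F, A ∩ B ∈ F)
    (hcover : ∀ S : Finset α, S.card = r → ∃ A ∈ F, ↑S ⊆ A)
    (S : Finset α) (hS : S.card ≤ r) : mlCl F ↑S ∈ F := by
  rcases mlCl_mem hinter (↑S : Set α) with h | h
  · exact h
  · exact absurd (mem_singleton_iff.1 h) (mlCl_proper hrcard hproper hcover S hS)

/-- Downward: every member has a generating set whose size is attained by a chain below. -/
private lemma down (hproper : ∀ A ∈ F, A ⊂ Set.univ)
    (hinter : ∀ A ∈ F, ∀ B ∈ F, A ∩ B ∈ F) :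
    ∀ (n : ℕ) (A : Set α), A ∈ F → A.ncard = n →
      ∃ (S : Finset α) (l : List (Set α)), mlCl F ↑S = A ∧ List.Chain' (· ⊂ ·) l ∧
        (∀ W ∈ l, W ∈ F) ∧ l.length = S.card + 1 ∧ l.getLast? = some A := by
  intro n
  induction n using Nat.strong_induction_on with
  | _ n ih =>
  intro A hA hcard
  by_cases hD : {B | B ∈ F ∧ B ⊂ A}.Nonempty
  · obtain ⟨B, hB, hmax⟩ := Set.Finite.exists_maximalFor id _ (Set.toFinite _) hD
    obtain ⟨S₀, l₀, hcl₀, hch₀, hF₀, hlen₀, hlast₀⟩ :=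
      ih B.ncard (by rw [← hcard]; exact Set.ncard_lt_ncard hB.2 (Set.toFinite A)) B hB.1 rfl
    obtain ⟨x, hxA, hxB⟩ := exists_of_ssubset hB.2
    have hS₀B : (↑S₀ : Set α) ⊆ B := hcl₀ ▸ subset_mlCl F ↑S₀
    have hxS₀ : x ∉ S₀ := fun h => hxB (hS₀B h)
    set W := mlCl F (↑(insert x S₀) : Set α) with hWdef
    have hWA : W ⊆ A := by
      apply mlCl_subset F (Or.inl hA)
      rw [Finset.coe_insert]
      exact insert_subset hxA (hS₀B.trans hB.2.subset)
    have hBW : B ⊆ W := by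
      rw [← hcl₀]
      exact mlCl_mono F (by rw [Finset.coe_insert]; exact subset_insert x _)
    have hxW : x ∈ W := subset_mlCl F _ (by simp)
    have hWF : W ∈ F := by
      rcases mlCl_mem hinter (↑(insert x S₀) : Set α) with h | h
      · exact h
      · rw [mem_singleton_iff] at h
        exact absurd (univ_subset_iff.1 (h ▸ hWA)) (hproper A hA).ne
    have hWeq : W = A := by
      by_contra hne
      have hWssA : W ⊂ A := hWA.ssubset_of_ne hne
      have hBeq : B = W := hBW.antisymm (hmax ⟨hWF, hWssA⟩ hBW)
      exact hxB (by rw [hBeq]; exact hxW)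
    refine ⟨insert x S₀, l₀ ++ [A], by rw [← hWdef, hWeq], ?_, ?_, ?_, ?_⟩
    · rw [show List.Chain' (· ⊂ ·) (l₀ ++ [A]) = List.IsChain (· ⊂ ·) (l₀ ++ [A]) from rfl, List.isChain_append]
      refine ⟨hch₀, List.isChain_singleton _, ?_⟩
      intro a ha b hb
      rw [hlast₀, Option.mem_some_iff] at ha
      rw [List.head?_cons, Option.mem_some_iff] at hb
      subst ha; subst hb
      exact hB.2
    · intro X hX
      rcases List.mem_append.1 hX with h | h
      · exact hF₀ X h
      · rw [List.mem_singleton] at h; subst h; exact hA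
    · rw [List.length_append, hlen₀, List.length_singleton,
        Finset.card_insert_of_notMem hxS₀]
    · exact List.getLast?_concat
  · refine ⟨∅, [A], ?_, List.isChain_singleton _, ?_, by simp, rfl⟩
    · have hsub : mlCl F (↑(∅ : Finset α) : Set α) ⊆ A :=
        mlCl_subset F (Or.inl hA) (by simp)
      have hmem : mlCl F (↑(∅ : Finset α) : Set α) ∈ F := by
        rcases mlCl_mem hinter (↑(∅ : Finset α) : Set α) with h | h
        · exact h
        · rw [mem_singleton_iff] at h
          exact absurd (univ_subset_iff.1 (h ▸ hsub)) (hproper A hA).ne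
      by_contra hne
      exact hD ⟨_, hmem, hsub.ssubset_of_ne hne⟩
    · intro X hX; rw [List.mem_singleton] at hX; subst hX; exact hA

/-- Upward chain extension. -/
private lemma up (hrcard : r ≤ Fintype.card α)
    (hproper : ∀ A ∈ F, A ⊂ Set.univ)
    (hinter : ∀ A ∈ F, ∀ B ∈ F, A ∩ B ∈ F)
    (hcover : ∀ S : Finset α, S.card = r → ∃ A ∈ F, ↑S ⊆ A) :
    ∀ (n : ℕ) (T : Finset α), T.card + n ≤ r →
      ∃ l : List (Set α), List.Chain' (· ⊂ ·) l ∧ (∀ W ∈ l, W ∈ F) ∧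
        l.head? = some (mlCl F ↑T) ∧ l.length = n + 1 := by
  classical
  intro n
  induction n with
  | zero =>
    intro T hT
    refine ⟨[mlCl F ↑T], List.isChain_singleton _, ?_, rfl, rfl⟩
    intro X hX; rw [List.mem_singleton] at hX; subst hX
    exact mlCl_mem_F hrcard hproper hinter hcover T (by omega)
  | succ n ihn =>
    intro T hT
    have hTF : mlCl F ↑T ∈ F := mlCl_mem_F hrcard hproper hinter hcover T (by omega)
    obtain ⟨y, hy⟩ := (ne_univ_iff_exists_notMem _).1
      (mlCl_proper hrcard hproper hcover T (by omega))
    have hyT : y ∉ T := fun h => hy (subset_mlCl F (↑T : Set α) h)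
    obtain ⟨l', hch, hF', hhead, hlen⟩ := ihn (insert y T)
      (by rw [Finset.card_insert_of_notMem hyT]; omega)
    have hss : mlCl F ↑T ⊂ mlCl F ↑(insert y T) := by
      refine (ssubset_iff_of_subset (mlCl_mono F ?_)).2
        ⟨y, subset_mlCl F _ (by simp), hy⟩
      rw [Finset.coe_insert]; exact subset_insert y _
    refine ⟨mlCl F ↑T :: l', ?_, ?_, rfl, by simp [hlen]⟩
    · rw [show List.Chain' (· ⊂ ·) (mlCl F ↑T :: l') = List.IsChain (· ⊂ ·) (mlCl F ↑T :: l') from rfl, List.isChain_cons]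
      refine ⟨?_, hch⟩
      intro b hb
      rw [hhead, Option.mem_some_iff] at hb
      subst hb
      exact hss
    · intro X hX
      rcases List.mem_cons.1 hX with h | h
      · subst h; exact hTF
      · exact hF' X h

private lemma chain_bound
    (hlen_le : ∀ (k : ℕ) (C : Fin (k + 1) → Set α), (∀ i, C i ∈ F) → StrictMono C → k ≤ r)
    (l : List (Set α)) (hc : List.Chain' (· ⊂ ·) l) (hF : ∀ W ∈ l, W ∈ F) :
    l.length ≤ r + 1 := by
  rcases l with - | ⟨a, l'⟩
  · simp
  have hc' : List.Chain' (· < ·) (a :: l') := by rw [Set.lt_eq_ssubset]; exact hc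
  have hp : List.Pairwise (· < ·) (a :: l') := List.isChain_iff_pairwise.1 hc'
  have hlen : (a :: l').length = l'.length + 1 := rfl
  have key := hlen_le l'.length (fun i => (a :: l').get i)
    (fun i => hF _ (List.get_mem (a :: l') i))
    (fun i j hij => List.pairwise_iff_get.1 hp i j hij)
  omega

private lemma mlCl_insert_eq {A : Set α} {S : Finset α} (hS : mlCl F ↑S = A) (x : α) :
    mlCl F ↑(insert x S) = mlCl F (insert x A) := by
  have hcoll : {W | W ∈ F ∪ {Set.univ} ∧ (↑(insert x S) : Set α) ⊆ W}
      = {W | W ∈ F ∪ {Set.univ} ∧ insert x A ⊆ W} := by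
    ext W
    simp only [mem_setOf_eq, Finset.coe_insert, insert_subset_iff]
    constructor
    · rintro ⟨hW, hxW, hSW⟩
      exact ⟨hW, hxW, by rw [← hS]; exact mlCl_subset F hW hSW⟩
    · rintro ⟨hW, hxW, hAW⟩
      exact ⟨hW, hxW, (subset_mlCl F (↑S : Set α)).trans (by rw [hS]; exact hAW)⟩
  unfold mlCl
  rw [hcoll]

/-- Key minimality: `mlCl F (insert x A)` is a minimal flat strictly above `A`. -/
private lemma cl_minimal (hrcard : r ≤ Fintype.card α)
    (hproper : ∀ A ∈ F, A ⊂ Set.univ)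
    (hinter : ∀ A ∈ F, ∀ B ∈ F, A ∩ B ∈ F)
    (hlen_le : ∀ (k : ℕ) (C : Fin (k + 1) → Set α), (∀ i, C i ∈ F) → StrictMono C → k ≤ r)
    (hcover : ∀ S : Finset α, S.card = r → ∃ A ∈ F, ↑S ⊆ A)
    {A : Set α} (hA : A ∈ F) {x : α} (hx : x ∉ A) :
    ∀ G' ∈ F ∪ {Set.univ}, A ⊂ G' → ¬G' ⊂ mlCl F (insert x A) := by
  classical
  intro G' hG' hAG' hlt
  set G := mlCl F (insert x A) with hGdef
  have hG'F : G' ∈ F := by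
    rcases hG' with h | h
    · exact h
    · rw [mem_singleton_iff] at h
      subst h
      exact absurd ((univ_subset_iff.1 hlt.subset).symm) hlt.ne
  obtain ⟨S, l₀, hclS, hch₀, hF₀, hlen₀, hlast₀⟩ := down hproper hinter A.ncard A hA rfl
  -- first chain : l₀ ++ [G']
  have hch1 : List.Chain' (· ⊂ ·) (l₀ ++ [G']) := by
    rw [show List.Chain' (· ⊂ ·) (l₀ ++ [G']) = List.IsChain (· ⊂ ·) (l₀ ++ [G']) from rfl, List.isChain_append]
    refine ⟨hch₀, List.isChain_singleton _, ?_⟩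
    intro a ha b hb
    rw [hlast₀, Option.mem_some_iff] at ha
    rw [List.head?_cons, Option.mem_some_iff] at hb
    subst ha; subst hb
    exact hAG'
  have hb1 := chain_bound hlen_le (l₀ ++ [G']) hch1 (by
    intro X hX
    rcases List.mem_append.1 hX with h | h
    · exact hF₀ X h
    · rw [List.mem_singleton] at h; subst h; exact hG'F)
  rw [List.length_append, hlen₀, List.length_singleton] at hb1
  have hSr : S.card + 1 ≤ r := by omega
  have hxS : x ∉ S := fun h => hx (hclS ▸ subset_mlCl F (↑S : Set α) h)
  have hcardT : (insert x S).card = S.card + 1 := Finset.card_insert_of_notMem hxS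
  have hGT : mlCl F ↑(insert x S) = G := mlCl_insert_eq hclS x
  obtain ⟨l₁, hch₁, hF₁, hhead₁, hlen₁⟩ := up hrcard hproper hinter hcover
    (r - (S.card + 1)) (insert x S) (by omega)
  rw [hGT] at hhead₁
  -- big chain: l₀ ++ (G' :: l₁)
  have hchbig : List.Chain' (· ⊂ ·) (l₀ ++ (G' :: l₁)) := by
    rw [show List.Chain' (· ⊂ ·) (l₀ ++ (G' :: l₁)) = List.IsChain (· ⊂ ·) (l₀ ++ (G' :: l₁)) from rfl, List.isChain_append]
    refine ⟨hch₀, ?_, ?_⟩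
    · rw [List.isChain_cons]
      refine ⟨?_, hch₁⟩
      intro b hb
      rw [hhead₁, Option.mem_some_iff] at hb
      subst hb
      exact hlt
    · intro a ha b hb
      rw [hlast₀, Option.mem_some_iff] at ha
      rw [List.head?_cons, Option.mem_some_iff] at hb
      subst ha; subst hb
      exact hAG'
  have hbbig := chain_bound hlen_le (l₀ ++ (G' :: l₁)) hchbig (by
    intro X hX
    rcases List.mem_append.1 hX with h | h
    · exact hF₀ X h
    · rcases List.mem_cons.1 h with h' | h'
      · subst h'; exact hG'F
      · exact hF₁ X h')
  rw [List.length_append, hlen₀, List.length_cons, hlen₁] at hbbig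
  omega

end Aux

/-- The partition property from the proof of the paper's Proposition "matroid lemma":
under the hypotheses of that proposition, for every `F ∈ 𝓕` the sets `G \ F`, where `G`
ranges over the minimal members of `𝓕 ∪ {E}` strictly containing `F`, are nonempty,
pairwise disjoint, and cover `E \ F`. -/
theorem partition_property {α : Type*} [Fintype α] (r : ℕ) (hr : 1 ≤ r)
    (hrcard : r ≤ Fintype.card α) (F : Set (Set α))
    (hproper : ∀ A ∈ F, A ⊂ Set.univ)
    (hinter : ∀ A ∈ F, ∀ B ∈ F, A ∩ B ∈ F)
    (hlen_pos : ∃ A ∈ F, ∃ B ∈ F, A ⊂ B)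
    (hlen_le : ∀ (k : ℕ) (C : Fin (k + 1) → Set α), (∀ i, C i ∈ F) → StrictMono C → k ≤ r)
    (hcover : ∀ S : Finset α, S.card = r → ∃ A ∈ F, ↑S ⊆ A) :
    ∀ A ∈ F,
      (∀ G ∈ {G | G ∈ F ∪ {Set.univ} ∧ A ⊂ G ∧
          ∀ G' ∈ F ∪ {Set.univ}, A ⊂ G' → ¬G' ⊂ G},
        (G \ A).Nonempty) ∧
      (∀ G ∈ {G | G ∈ F ∪ {Set.univ} ∧ A ⊂ G ∧
          ∀ G' ∈ F ∪ {Set.univ}, A ⊂ G' → ¬G' ⊂ G},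
        ∀ G' ∈ {G | G ∈ F ∪ {Set.univ} ∧ A ⊂ G ∧
          ∀ G'' ∈ F ∪ {Set.univ}, A ⊂ G'' → ¬G'' ⊂ G},
        G ≠ G' → Disjoint (G \ A) (G' \ A)) ∧
      (⋃ G ∈ {G | G ∈ F ∪ {Set.univ} ∧ A ⊂ G ∧
          ∀ G' ∈ F ∪ {Set.univ}, A ⊂ G' → ¬G' ⊂ G}, G \ A) = Set.univ \ A := by
  letI : DecidableEq α := Classical.decEq α
  intro A hA
  refine ⟨?_, ?_, ?_⟩
  · -- nonemptiness
    rintro G ⟨-, hAG, -⟩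
    obtain ⟨x, hxG, hxA⟩ := Set.exists_of_ssubset hAG
    exact ⟨x, hxG, hxA⟩
  · -- disjointness
    rintro G ⟨hGmem, hAG, hGmin⟩ G' ⟨hG'mem, hAG', hG'min⟩ hne
    rw [Set.disjoint_left]
    rintro x ⟨hxG, hxA⟩ ⟨hxG', -⟩
    rcases hGmem with hGF | hGu
    · rcases hG'mem with hG'F | hG'u
      · -- both proper
        have hBF : G ∩ G' ∈ F := hinter G hGF G' hG'F
        have hAB : A ⊂ G ∩ G' := by
          refine (Set.ssubset_iff_of_subset (Set.subset_inter hAG.subset hAG'.subset)).2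
            ⟨x, ⟨hxG, hxG'⟩, hxA⟩
        by_cases hBG : G ∩ G' = G
        · have hGsub : G ⊆ G' := by rw [← hBG]; exact Set.inter_subset_right
          exact hG'min G (Or.inl hGF) hAG (hGsub.ssubset_of_ne hne)
        · exact hGmin (G ∩ G') (Or.inl hBF) hAB
            (Set.inter_subset_left.ssubset_of_ne hBG)
      · rw [Set.mem_singleton_iff] at hG'u
        subst hG'u
        exact hG'min G (Or.inl hGF) hAG (hproper G hGF)
    · rw [Set.mem_singleton_iff] at hGu
      subst hGu
      rcases hG'mem with hG'F | hG'u
      · exact hGmin G' (Or.inl hG'F) hAG' (hproper G' hG'F)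
      · rw [Set.mem_singleton_iff] at hG'u
        exact hne (hG'u.symm)
  · -- covering
    apply Set.Subset.antisymm
    · refine Set.iUnion₂_subset ?_
      rintro G ⟨-, -, -⟩ x ⟨hxG, hxA⟩
      exact ⟨Set.mem_univ x, hxA⟩
    · rintro x ⟨-, hxA⟩
      have hGmem := mlCl_mem hinter (insert x A)
      have hxG : x ∈ mlCl F (insert x A) :=
        subset_mlCl F (insert x A) (Set.mem_insert x A)
      have hAG : A ⊂ mlCl F (insert x A) :=
        (Set.ssubset_iff_of_subset
          ((Set.subset_insert x A).trans (subset_mlCl F (insert x A)))).2 ⟨x, hxG, hxA⟩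
      exact Set.mem_biUnion
        ⟨hGmem, hAG, cl_minimal hrcard hproper hinter hlen_le hcover hA hxA⟩
        ⟨hxG, hxA⟩
end

section
/- Let E be a finite set, let r ≥ 1 be a natural number with r ≤ |E|, and let 𝓕 be a collection of proper subsets of E such that: (i) 𝓕 is closed under pairwise intersection; (ii) 0 < ℓ(𝓕) ≤ r; and (iii) every subset S ⊆ E with |S| = r is contained in some member of 𝓕. Say that F ∈ 𝓕 is generated by S ⊆ E if S ⊆ F and F = ⋂{G ∈ 𝓕 : S ⊆ G}. If F ∈ 𝓕 is generated by a set S and is generated by no proper subset of S, then there exists a chain F_0 ⊊ F_1 ⊊ ⋯ ⊊ F_{|S|} = F with every F_i ∈ 𝓕; in particular |S| ≤ r. (An intermediate claim from the proof of the paper's Proposition "matroid lemma".) -/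
def GeneratedBy {α : Type*} (F : Set (Set α)) (S : Set α) (A : Set α) : Prop :=
  S ⊆ A ∧ A = ⋂₀ {G | G ∈ F ∧ S ⊆ G}

lemma sInter_mem_of_closed {α : Type*} [Fintype α] {F : Set (Set α)}
    (hinter : ∀ A ∈ F, ∀ B ∈ F, A ∩ B ∈ F) {G : Set (Set α)} (hG : G ⊆ F)
    (hne : G.Nonempty) : ⋂₀ G ∈ F := by
  have hfin : G.Finite := Set.toFinite G
  have hne' : hfin.toFinset.Nonempty := by simpa using hne
  have h1 : hfin.toFinset.inf' hne' id ∈ F :=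
    Finset.inf'_mem F (fun x hx y hy => hinter x hx y hy) _ hne' id
      (fun i hi => hG (hfin.mem_toFinset.mp hi))
  have h2 : hfin.toFinset.inf' hne' id = ⋂₀ G := by
    rw [Finset.inf'_eq_inf, Finset.inf_id_eq_sInf, Set.sInf_eq_sInter, hfin.coe_toFinset]
  rwa [h2] at h1

/-- Intermediate claim from the proof of the paper's Proposition "matroid lemma": under its
hypotheses, if `F ∈ 𝓕` is generated by a set `S` but by no proper subset of `S`, then there is
a chain `F_0 ⊊ F_1 ⊊ ⋯ ⊊ F_{|S|} = F` in `𝓕`; in particular `|S| ≤ r`. -/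
theorem chain_of_minimal_generating_set {α : Type*} [Fintype α] (r : ℕ) (hr : 1 ≤ r)
    (hrcard : r ≤ Fintype.card α) (F : Set (Set α))
    (hproper : ∀ A ∈ F, A ⊂ Set.univ)
    (hinter : ∀ A ∈ F, ∀ B ∈ F, A ∩ B ∈ F)
    (hlen_pos : ∃ A ∈ F, ∃ B ∈ F, A ⊂ B)
    (hlen_le : ∀ (k : ℕ) (C : Fin (k + 1) → Set α), (∀ i, C i ∈ F) → StrictMono C → k ≤ r)
    (hcover : ∀ S : Finset α, S.card = r → ∃ A ∈ F, ↑S ⊆ A)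
    (A : Set α) (hA : A ∈ F) (S : Finset α)
    (hgen : GeneratedBy F (↑S) A)
    (hmin : ∀ S' : Finset α, S' ⊂ S → ¬GeneratedBy F (↑S') A) :
    (∃ C : Fin (S.card + 1) → Set α, (∀ i, C i ∈ F) ∧ StrictMono C ∧
      C (Fin.last S.card) = A) ∧ S.card ≤ r := by
  classical
  set k := S.card with hk
  -- enumeration of S
  set f : Fin k → α := fun j => (S.equivFin.symm j : α) with hf
  have hf_inj : Function.Injective f := fun a b h => by
    have := Subtype.ext h
    simpa using S.equivFin.symm.injective this
  have hf_mem : ∀ j, f j ∈ S := fun j => (S.equivFin.symm j).2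
  have hf_range : Set.range f = ↑S := by
    ext a
    constructor
    · rintro ⟨j, rfl⟩; exact hf_mem j
    · intro ha
      exact ⟨S.equivFin ⟨a, ha⟩, by simp [hf]⟩
  -- closure operator
  set cl : Set α → Set α := fun T => ⋂₀ {G | G ∈ F ∧ T ⊆ G} with hcl
  have hsubcl : ∀ T, T ⊆ cl T := fun T x hx G hG => hG.2 hx
  have hclmono : ∀ T U : Set α, T ⊆ U → cl T ⊆ cl U := by
    intro T U hTU
    apply Set.sInter_subset_sInter
    rintro G ⟨hG1, hG2⟩
    exact ⟨hG1, hTU.trans hG2⟩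
  have hclle : ∀ (T G : Set α), G ∈ F → T ⊆ G → cl T ⊆ G := by
    intro T G hG hTG
    exact Set.sInter_subset_of_mem ⟨hG, hTG⟩
  have hclmem : ∀ T : Set α, T ⊆ ↑S → cl T ∈ F := by
    intro T hT
    exact sInter_mem_of_closed hinter (fun G hG => hG.1) ⟨A, hA, hT.trans hgen.1⟩
  have hclS : cl ↑S = A := hgen.2.symm
  -- the chain
  set C : Fin (k + 1) → Set α := fun i => cl (f '' {j | (j : ℕ) < (i : ℕ)}) with hC
  have hsubS : ∀ i : Fin (k+1), f '' {j | (j : ℕ) < (i : ℕ)} ⊆ ↑S := by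
    rintro i a ⟨j, _, rfl⟩; exact hf_mem j
  have hCmem : ∀ i, C i ∈ F := fun i => hclmem _ (hsubS i)
  have hCmono : Monotone C := by
    intro i i' h
    refine hclmono _ _ (Set.image_mono (fun j hj => ?_))
    simp only [Set.mem_setOf_eq] at *
    exact lt_of_lt_of_le hj h
  have hClast : C (Fin.last k) = A := by
    have : f '' {j | (j : ℕ) < k} = ↑S := by
      have huniv : {j : Fin k | (j : ℕ) < k} = Set.univ := by
        ext j; simp [j.2]
      rw [huniv, Set.image_univ, hf_range]
    simp only [hC, Fin.val_last, this, hclS]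
  have hCstrict : StrictMono C := by
    rw [Fin.strictMono_iff_lt_succ]
    intro i
    have hle : C i.castSucc ⊆ C i.succ := hCmono (le_of_lt (Fin.castSucc_lt_succ (i := i)))
    refine lt_of_le_of_ne hle ?_
    intro heq
    -- f i ∈ cl (T_i)
    set Ti : Set α := f '' {j | (j : ℕ) < (i : ℕ)} with hTi
    have hmemfi : f i ∈ cl Ti := by
      have : f i ∈ f '' {j | (j : ℕ) < ((i.succ : Fin (k+1)) : ℕ)} := by
        exact ⟨i, by simp, rfl⟩
      have h2 : f i ∈ C i.succ := hsubcl _ this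
      rw [← heq] at h2
      simpa [hC, hTi] using h2
    -- S' = S.erase (f i)
    set S' : Finset α := S.erase (f i) with hS'
    have hTiS' : Ti ⊆ ↑S' := by
      rintro a ⟨j, hj, rfl⟩
      simp only [hS', Finset.coe_erase, Set.mem_diff, Set.mem_singleton_iff]
      refine ⟨hf_mem j, fun h => ?_⟩
      have hji := hf_inj h
      subst hji
      simp only [Set.mem_setOf_eq] at hj
      exact lt_irrefl _ hj
    have hfiS' : f i ∈ cl ↑S' := hclmono _ _ hTiS' hmemfi
    have hSsubclS' : ↑S ⊆ cl (↑S' : Set α) := by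
      intro a ha
      by_cases h : a = f i
      · rw [h]; exact hfiS'
      · exact hsubcl _ (by simp [hS', h, ha])
    have hclS'A : cl ↑S' = A := by
      apply Set.Subset.antisymm
      · exact hclle _ A hA ((Finset.coe_subset.mpr (Finset.erase_subset _ _)).trans hgen.1)
      · rw [← hclS]
        apply Set.sInter_subset_sInter
        rintro G ⟨hG1, hG2⟩
        exact ⟨hG1, hSsubclS'.trans (hclle _ G hG1 hG2)⟩
    have : GeneratedBy F ↑S' A :=
      ⟨(Finset.coe_subset.mpr (Finset.erase_subset _ _)).trans hgen.1, hclS'A.symm⟩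
    exact hmin S' (Finset.erase_ssubset (hf_mem i)) this
  exact ⟨⟨C, hCmem, hCstrict, hClast⟩, hlen_le k C hCmem hCstrict⟩
end

section
/- (Loop theorem: the image of a valuated matroid of rank r+1 under the tropicalized map on a loop has Baker–Norine rank at least r, hence is a matroidal linear series of dimension r.) Let d ≥ 1 and r be natural numbers, let L > 0 be a real number, and let (𝒱, M) be a valuated matroid on Fin d of rank r + 1. For k ∈ Fin d define φ_k : [0, L] → ℝ by φ_k(x) = min((d−k)·x, k·(L−x)), and for x ∈ (0, L) define ℓ_k(x) = d−k if d·x ≤ k·L and ℓ_k(x) = −k otherwise, and ρ_k(x) = d−k if d·x < k·L and ρ_k(x) = −k otherwise (these are the left and right slopes of φ_k at x, as integers). Then for every finitely supported function m : [0, L) → ℕ with total sum r, there exists w ∈ 𝒱 not identically ∞ with the following properties, where A_w(x) = { k ∈ Fin d : w(k) + φ_k(x) = min_{k′} (w(k′) + φ_{k′}(x)) } (a nonempty finite set of indices with finite values): (a) max A_w(0) − min A_w(0) ≥ m(0); and (b) for every x with 0 < x < L, (max over k ∈ A_w(x) of ℓ_k(x)) − (min over k ∈ A_w(x) of ρ_k(x))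 ≥ m(x). Identifying the circle of circumference L with [0, L) with base point v = 0 and divisor D = d·v, these conditions say exactly that D + div(min_k (w(k) + φ_k)) − D′ is effective, where D′ is the degree-r effective divisor determined by m. -/
/-- A valuated matroid on `Fin n` (given by its set of valuated covectors `V`) with underlying
matroid `M`. -/
structure IsValuatedMatroid {n : ℕ} (V : Set (Fin n → WithTop ℝ)) (M : Matroid (Fin n)) :
    Prop where
  ground : M.E = Set.univ
  top_mem : (⊤ : Fin n → WithTop ℝ) ∈ V
  inf_mem : ∀ w ∈ V, ∀ w' ∈ V, (fun i => min (w i) (w' i)) ∈ V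
  add_mem : ∀ w ∈ V, ∀ a : WithTop ℝ, (fun i => w i + a) ∈ V
  exchange : ∀ w ∈ V, ∀ w' ∈ V, ∀ i, w i = w' i →
    ∃ w'' ∈ V, w'' i = ⊤ ∧ (∀ j, j ≠ i → min (w j) (w' j) ≤ w'' j) ∧
      ∀ j, j ≠ i → w j ≠ w' j → w'' j = min (w j) (w' j)
  support_flat : ∀ w ∈ V, M.IsFlat {i | w i = ⊤}
  flat_support : ∀ F, M.IsFlat F → ∃ w ∈ V, F = {i | w i = ⊤}

/-- The generator `φ_k(x) = min((d−k)·x, k·(L−x))` of `R(d·v)` on a loop of circumference `L`,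
identified with `[0, L)` with base point `v = 0`. -/
noncomputable def loopPhi (d : ℕ) (L : ℝ) (k : ℕ) (x : ℝ) : ℝ :=
  min (((d : ℝ) - (k : ℝ)) * x) ((k : ℝ) * (L - x))

/-- The left slope of `φ_k` at an interior point `x`: `d − k` if `d·x ≤ k·L`, else `−k`. -/
noncomputable def leftSlope (d : ℕ) (L : ℝ) (k : ℕ) (x : ℝ) : ℤ :=
  if (d : ℝ) * x ≤ (k : ℝ) * L then (d : ℤ) - (k : ℤ) else -(k : ℤ)

/-- The right slope of `φ_k` at an interior point `x`: `d − k` if `d·x < k·L`, else `−k`. -/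
noncomputable def rightSlope (d : ℕ) (L : ℝ) (k : ℕ) (x : ℝ) : ℤ :=
  if (d : ℝ) * x < (k : ℝ) * L then (d : ℤ) - (k : ℤ) else -(k : ℤ)

/-- `loopEval L w x = min_k (w k + φ_k(x))`, computed in `ℝ ∪ {∞}`. -/
noncomputable def loopEval {d : ℕ} (L : ℝ) (w : Fin d → WithTop ℝ) (x : ℝ) : WithTop ℝ :=
  Finset.univ.inf fun k : Fin d => w k + ((loopPhi d L (k : ℕ) x : ℝ) : WithTop ℝ)

/-- `loopArgSet L w x` is the set of indices `k` (as natural numbers `0, …, d−1`) at which the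
minimum `min_k (w k + φ_k(x))` is attained. -/
def loopArgSet {d : ℕ} (L : ℝ) (w : Fin d → WithTop ℝ) (x : ℝ) : Set ℕ :=
  { k : ℕ | ∃ h : k < d,
      w ⟨k, h⟩ + ((loopPhi d L k x : ℝ) : WithTop ℝ) = loopEval L w x }

namespace LoopAux

open Finset

variable {d : ℕ} {L : ℝ}

/-- The argmin set as a `Finset` of `Fin d`. -/
noncomputable def Afin (L : ℝ) (w : Fin d → WithTop ℝ) (x : ℝ) : Finset (Fin d) :=
  @Finset.filter _ (fun k => w k + ((loopPhi d L (k : ℕ) x : ℝ) : WithTop ℝ) = loopEval L w x)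
    (Classical.decPred _) Finset.univ

lemma mem_Afin {w : Fin d → WithTop ℝ} {x : ℝ} {k : Fin d} :
    k ∈ Afin L w x ↔ w k + ((loopPhi d L (k : ℕ) x : ℝ) : WithTop ℝ) = loopEval L w x := by
  simp [Afin]

lemma loopEval_le (w : Fin d → WithTop ℝ) (x : ℝ) (k : Fin d) :
    loopEval L w x ≤ w k + ((loopPhi d L (k : ℕ) x : ℝ) : WithTop ℝ) :=
  Finset.inf_le (Finset.mem_univ k)

lemma afin_nonempty (hd : 0 < d) (w : Fin d → WithTop ℝ) (x : ℝ) :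
    (Afin L w x).Nonempty := by
  haveI : Nonempty (Fin d) := ⟨⟨0, hd⟩⟩
  obtain ⟨k, -, hk⟩ := Finset.exists_mem_eq_inf (Finset.univ : Finset (Fin d))
    Finset.univ_nonempty (fun k : Fin d => w k + ((loopPhi d L (k : ℕ) x : ℝ) : WithTop ℝ))
  exact ⟨k, mem_Afin.2 hk.symm⟩

lemma exists_ne_top {w : Fin d → WithTop ℝ} (hw : w ≠ ⊤) : ∃ k, w k ≠ ⊤ :=
  Function.ne_iff.1 hw

lemma loopEval_ne_top {w : Fin d → WithTop ℝ} (hw : w ≠ ⊤) (x : ℝ) :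
    loopEval L w x ≠ ⊤ := by
  obtain ⟨k, hk⟩ := exists_ne_top hw
  have h1 : w k + ((loopPhi d L (k : ℕ) x : ℝ) : WithTop ℝ) ≠ ⊤ :=
    WithTop.add_ne_top.2 ⟨hk, WithTop.coe_ne_top⟩
  exact fun h => h1 (top_le_iff.1 (h ▸ loopEval_le w x k))

lemma loopEval_add (w : Fin d → WithTop ℝ) (x : ℝ) (a : ℝ) :
    loopEval L (fun i => w i + (a : WithTop ℝ)) x = loopEval L w x + (a : WithTop ℝ) := by
  rcases Nat.eq_zero_or_pos d with hd | hd
  · subst hd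
    have h1 : loopEval L (fun i => w i + (a : WithTop ℝ)) x = ⊤ := by
      simp [loopEval]
    have h2 : loopEval L w x = ⊤ := by simp [loopEval]
    rw [h1, h2, top_add]
  apply le_antisymm
  · haveI : Nonempty (Fin d) := ⟨⟨0, hd⟩⟩
    obtain ⟨k, -, hk⟩ := Finset.exists_mem_eq_inf (Finset.univ : Finset (Fin d))
      Finset.univ_nonempty (fun k : Fin d => w k + ((loopPhi d L (k : ℕ) x : ℝ) : WithTop ℝ))
    calc loopEval L (fun i => w i + (a : WithTop ℝ)) x
        ≤ (w k + (a : WithTop ℝ)) + ((loopPhi d L (k : ℕ) x : ℝ) : WithTop ℝ) :=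
          loopEval_le _ x k
      _ = (w k + ((loopPhi d L (k : ℕ) x : ℝ) : WithTop ℝ)) + (a : WithTop ℝ) := by
          rw [add_right_comm]
      _ = loopEval L w x + (a : WithTop ℝ) := by rw [loopEval, hk]
  · apply Finset.le_inf
    intro k _
    have h1 : loopEval L w x ≤ w k + ((loopPhi d L (k : ℕ) x : ℝ) : WithTop ℝ) :=
      loopEval_le w x k
    calc loopEval L w x + (a : WithTop ℝ)
        ≤ (w k + ((loopPhi d L (k : ℕ) x : ℝ) : WithTop ℝ)) + (a : WithTop ℝ) :=
          add_le_add_left h1 _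
      _ = (w k + (a : WithTop ℝ)) + ((loopPhi d L (k : ℕ) x : ℝ) : WithTop ℝ) := by
          rw [add_right_comm]

lemma afin_add (w : Fin d → WithTop ℝ) (x : ℝ) (a : ℝ) :
    Afin L (fun i => w i + (a : WithTop ℝ)) x = Afin L w x := by
  ext k
  rw [mem_Afin, mem_Afin, loopEval_add, add_right_comm]
  exact WithTop.add_right_inj (WithTop.coe_ne_top (a := a))

lemma loopEval_min (w w' : Fin d → WithTop ℝ) (x : ℝ) :
    loopEval L (fun i => min (w i) (w' i)) x = min (loopEval L w x) (loopEval L w' x) := by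
  apply le_antisymm
  · apply le_min
    · exact Finset.inf_mono_fun fun k _ => add_le_add_left (min_le_left _ _) _
    · exact Finset.inf_mono_fun fun k _ => add_le_add_left (min_le_right _ _) _
  · apply Finset.le_inf
    intro k _
    have : min (w k) (w' k) + ((loopPhi d L (k : ℕ) x : ℝ) : WithTop ℝ) =
        min (w k + ((loopPhi d L (k : ℕ) x : ℝ) : WithTop ℝ))
          (w' k + ((loopPhi d L (k : ℕ) x : ℝ) : WithTop ℝ)) := by
      rcases le_total (w k) (w' k) with h | h
      · rw [min_eq_left h, min_eq_left (add_le_add_left h _)]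
      · rw [min_eq_right h, min_eq_right (add_le_add_left h _)]
    rw [this]
    exact min_le_min (loopEval_le w x k) (loopEval_le w' x k)

lemma afin_min_left {w w' : Fin d → WithTop ℝ} {x : ℝ}
    (h : loopEval L w x ≤ loopEval L w' x) :
    Afin L w x ⊆ Afin L (fun i => min (w i) (w' i)) x := by
  intro k hk
  rw [mem_Afin] at hk ⊢
  apply le_antisymm
  · calc min (w k) (w' k) + ((loopPhi d L (k : ℕ) x : ℝ) : WithTop ℝ)
        ≤ w k + ((loopPhi d L (k : ℕ) x : ℝ) : WithTop ℝ) :=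
          add_le_add_left (min_le_left _ _) _
      _ = loopEval L w x := hk
      _ = loopEval L (fun i => min (w i) (w' i)) x := by
          rw [loopEval_min, min_eq_left h]
  · exact loopEval_le _ x k

lemma afin_min_right {w w' : Fin d → WithTop ℝ} {x : ℝ}
    (h : loopEval L w' x ≤ loopEval L w x) :
    Afin L w' x ⊆ Afin L (fun i => min (w i) (w' i)) x := by
  have : (fun i => min (w i) (w' i)) = fun i => min (w' i) (w i) := by
    funext i; exact min_comm _ _
  rw [this]
  exact afin_min_left h

lemma argSet_eq (w : Fin d → WithTop ℝ) (x : ℝ) :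
    loopArgSet L w x = ↑((Afin L w x).image Fin.val) := by
  ext n
  simp only [loopArgSet, Set.mem_setOf_eq, Finset.coe_image, Set.mem_image, Finset.mem_coe]
  constructor
  · rintro ⟨h, hn⟩
    exact ⟨⟨n, h⟩, mem_Afin.2 hn, rfl⟩
  · rintro ⟨k, hk, rfl⟩
    exact ⟨k.isLt, by simpa using mem_Afin.1 hk⟩

end LoopAux

namespace LoopAux

open Finset

variable {d : ℕ} {L : ℝ}

lemma flat_closure' (M : Matroid (Fin d)) (X : Set (Fin d)) : M.IsFlat (M.closure X) := by
  rw [Matroid.closure_def, Set.sInter_eq_iInter]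
  haveI : Nonempty ({F // F ∈ {F | M.IsFlat F ∧ X ∩ M.E ⊆ F}}) :=
    ⟨⟨M.E, M.ground_isFlat, Set.inter_subset_right⟩⟩
  exact Matroid.IsFlat.iInter fun F => F.2.1

/-- `Q M F c` : no set of fewer than `c` elements spans `univ` over `F`;
this says that the corank of `F` is at least `c`. -/
def Q (M : Matroid (Fin d)) (F : Set (Fin d)) (c : ℕ) : Prop :=
  ∀ X : Finset (Fin d), X.card < c → ¬ (Set.univ ⊆ M.closure (F ∪ ↑X))

lemma Q.mono {M : Matroid (Fin d)} {F : Set (Fin d)} {c c' : ℕ} (h : Q M F c) (hcc : c' ≤ c) :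
    Q M F c' := fun X hX => h X (lt_of_lt_of_le hX hcc)

lemma Q.ne_univ {M : Matroid (Fin d)} {F : Set (Fin d)} {c : ℕ}
    (hF : M.IsFlat F) (hQ : Q M F c) (hc : 0 < c) : F ≠ Set.univ := by
  intro h
  apply hQ ∅ (by simpa using hc)
  have h2 : F ∪ ↑(∅ : Finset (Fin d)) = F := by simp
  rw [h2, hF.closure, h]

lemma Q.step {M : Matroid (Fin d)} {F : Set (Fin d)} {c : ℕ}
    (hQ : Q M F c) (k : Fin d) : Q M (M.closure (insert k F)) (c - 1) := by
  intro X hX hsub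
  refine hQ (insert k X) ?_ ?_
  · calc (insert k X).card ≤ X.card + 1 := Finset.card_insert_le _ _
      _ < c := by omega
  · have e1 : M.closure (M.closure (insert k F) ∪ ↑X) = M.closure (insert k F ∪ ↑X) :=
      M.closure_union_closure_left_eq _ _
    have e2 : insert k F ∪ ↑X = F ∪ ↑(insert k X) := by
      rw [Finset.coe_insert, Set.insert_union, Set.union_insert]
    rwa [e1, e2] at hsub

lemma Q_init {r : ℕ} {M : Matroid (Fin d)} (hground : M.E = Set.univ)
    (hrank : ∀ B, M.IsBase B → B.ncard = r + 1) :
    Q M (M.closure ∅) (r + 1) := by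
  intro X hX hsub
  have e1 : M.closure (M.closure ∅ ∪ ↑X) = M.closure (∅ ∪ ↑X) :=
    M.closure_union_closure_left_eq _ _
  rw [e1, Set.empty_union] at hsub
  have hXE : (↑X : Set (Fin d)) ⊆ M.E := by rw [hground]; exact Set.subset_univ _
  have hsp : M.Spanning ↑X := by
    rw [Matroid.spanning_iff_closure_eq hXE]
    exact le_antisymm (M.closure_subset_ground _) (by rw [hground]; exact hsub)
  obtain ⟨B, hB, hBX⟩ := hsp.exists_isBase_subset
  have h1 : B.ncard = r + 1 := hrank B hB
  have h2 : B.ncard ≤ (↑X : Set (Fin d)).ncard := Set.ncard_le_ncard hBX X.finite_toSet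
  rw [Set.ncard_coe_finset] at h2
  omega

lemma card_union_of_ne {α : Type*} [DecidableEq α] {A B : Finset α} {s : ℕ}
    (hne : A ≠ B) (hA : s + 1 ≤ A.card) (hB : s + 1 ≤ B.card) :
    s + 2 ≤ (A ∪ B).card := by
  by_cases h : B ⊆ A
  · have : ¬ (A ⊆ B) := fun h' => hne (le_antisymm h' h)
    obtain ⟨a, haA, haB⟩ := Finset.not_subset.1 this
    have hsub : insert a B ⊆ A ∪ B := by
      intro y hy
      rcases Finset.mem_insert.1 hy with rfl | hy
      · exact Finset.mem_union_left _ haA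
      · exact Finset.mem_union_right _ hy
    calc s + 2 ≤ B.card + 1 := by omega
      _ = (insert a B).card := (Finset.card_insert_of_notMem haB).symm
      _ ≤ (A ∪ B).card := Finset.card_le_card hsub
  · obtain ⟨b, hbB, hbA⟩ := Finset.not_subset.1 h
    have hsub : insert b A ⊆ A ∪ B := by
      intro y hy
      rcases Finset.mem_insert.1 hy with rfl | hy
      · exact Finset.mem_union_right _ hbB
      · exact Finset.mem_union_left _ hy
    calc s + 2 ≤ A.card + 1 := by omega
      _ = (insert b A).card := (Finset.card_insert_of_notMem hbA).symm
      _ ≤ (A ∪ B).card := Finset.card_le_card hsub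

lemma slope_gap {mx : ℕ} {x : ℝ} (N : Finset ℕ)
    (hNd : ∀ n ∈ N, n < d) (hc : mx + 1 ≤ N.card) :
    ∃ k₁ ∈ N, ∃ k₂ ∈ N, (mx : ℤ) ≤ leftSlope d L k₁ x - rightSlope d L k₂ x := by
  classical
  have hNne : N.Nonempty := Finset.card_pos.1 (by omega)
  set B := N.filter (fun k : ℕ => ((k : ℝ) * L ≤ (d : ℝ) * x)) with hBdef
  set C := N.filter (fun k : ℕ => ((d : ℝ) * x ≤ (k : ℝ) * L)) with hCdef
  have hBC : N ⊆ B ∪ C := by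
    intro k hk
    rcases le_total ((k : ℝ) * L) ((d : ℝ) * x) with h | h
    · exact Finset.mem_union_left _ (Finset.mem_filter.2 ⟨hk, h⟩)
    · exact Finset.mem_union_right _ (Finset.mem_filter.2 ⟨hk, h⟩)
  by_cases hC : C.Nonempty
  · by_cases hB : B.Nonempty
    · set k₁ := C.min' hC with hk₁def
      set k₂ := B.max' hB with hk₂def
      have hk₁C : k₁ ∈ C := C.min'_mem hC
      have hk₂B : k₂ ∈ B := B.max'_mem hB
      have hk₁N : k₁ ∈ N := (Finset.filter_subset _ _) hk₁C
      have hk₂N : k₂ ∈ N := (Finset.filter_subset _ _) hk₂B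
      refine ⟨k₁, hk₁N, k₂, hk₂N, ?_⟩
      have hls : leftSlope d L k₁ x = (d : ℤ) - k₁ :=
        if_pos (Finset.mem_filter.1 hk₁C).2
      have hrs : rightSlope d L k₂ x = -(k₂ : ℤ) :=
        if_neg (not_lt.2 (Finset.mem_filter.1 hk₂B).2)
      rw [hls, hrs]
      have hCsub : C ⊆ Finset.Icc k₁ (d - 1) := by
        intro k hk
        exact Finset.mem_Icc.2 ⟨Finset.min'_le _ _ hk,
          by have := hNd k ((Finset.filter_subset _ _) hk); omega⟩
      have hBsub : B ⊆ Finset.range (k₂ + 1) := by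
        intro k hk
        exact Finset.mem_range.2 (by have := Finset.le_max' _ _ hk; omega)
      have hCcard : C.card ≤ d - k₁ := by
        calc C.card ≤ (Finset.Icc k₁ (d - 1)).card := Finset.card_le_card hCsub
          _ = d - 1 + 1 - k₁ := Nat.card_Icc _ _
          _ ≤ d - k₁ := by have := hNd k₁ hk₁N; omega
      have hBcard : B.card ≤ k₂ + 1 := by
        calc B.card ≤ (Finset.range (k₂ + 1)).card := Finset.card_le_card hBsub
          _ = k₂ + 1 := Finset.card_range _
      have htot : mx + 1 ≤ (k₂ + 1) + (d - k₁) := by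
        calc mx + 1 ≤ N.card := hc
          _ ≤ (B ∪ C).card := Finset.card_le_card hBC
          _ ≤ B.card + C.card := Finset.card_union_le _ _
          _ ≤ (k₂ + 1) + (d - k₁) := by omega
      have hk₁d : k₁ < d := hNd k₁ hk₁N
      omega
    · -- B empty : every element k of N has d*x < k*L
      set k₁ := N.min' hNne with hk₁def
      set k₂ := N.max' hNne with hk₂def
      have hk₁N : k₁ ∈ N := N.min'_mem hNne
      have hk₂N : k₂ ∈ N := N.max'_mem hNne
      have hstrict : ∀ k ∈ N, (d : ℝ) * x < (k : ℝ) * L := by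
        intro k hk
        by_contra hcon
        exact hB ⟨k, Finset.mem_filter.2 ⟨hk, le_of_not_gt hcon⟩⟩
      refine ⟨k₁, hk₁N, k₂, hk₂N, ?_⟩
      have hls : leftSlope d L k₁ x = (d : ℤ) - k₁ := if_pos (le_of_lt (hstrict k₁ hk₁N))
      have hrs : rightSlope d L k₂ x = (d : ℤ) - k₂ := if_pos (hstrict k₂ hk₂N)
      rw [hls, hrs]
      have hsub : N ⊆ Finset.Icc k₁ k₂ := fun k hk =>
        Finset.mem_Icc.2 ⟨Finset.min'_le _ _ hk, Finset.le_max' _ _ hk⟩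
      have hcard : N.card ≤ k₂ + 1 - k₁ := by
        calc N.card ≤ (Finset.Icc k₁ k₂).card := Finset.card_le_card hsub
          _ = k₂ + 1 - k₁ := Nat.card_Icc _ _
      have hle : k₁ ≤ k₂ := N.min'_le _ hk₂N
      omega
  · -- C empty : every element k of N has k*L < d*x
    set k₁ := N.min' hNne with hk₁def
    set k₂ := N.max' hNne with hk₂def
    have hk₁N : k₁ ∈ N := N.min'_mem hNne
    have hk₂N : k₂ ∈ N := N.max'_mem hNne
    have hstrict : ∀ k ∈ N, (k : ℝ) * L < (d : ℝ) * x := by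
      intro k hk
      by_contra hcon
      exact hC ⟨k, Finset.mem_filter.2 ⟨hk, le_of_not_gt hcon⟩⟩
    refine ⟨k₁, hk₁N, k₂, hk₂N, ?_⟩
    have hls : leftSlope d L k₁ x = -(k₁ : ℤ) := if_neg (not_le.2 (hstrict k₁ hk₁N))
    have hrs : rightSlope d L k₂ x = -(k₂ : ℤ) := if_neg (not_lt.2 (le_of_lt (hstrict k₂ hk₂N)))
    rw [hls, hrs]
    have hsub : N ⊆ Finset.Icc k₁ k₂ := fun k hk =>
      Finset.mem_Icc.2 ⟨Finset.min'_le _ _ hk, Finset.le_max' _ _ hk⟩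
    have hcard : N.card ≤ k₂ + 1 - k₁ := by
      calc N.card ≤ (Finset.Icc k₁ k₂).card := Finset.card_le_card hsub
        _ = k₂ + 1 - k₁ := Nat.card_Icc _ _
    have hle : k₁ ≤ k₂ := N.min'_le _ hk₂N
    omega

end LoopAux

namespace LoopAux

open Finset

lemma key {d : ℕ} (hd : 0 < d) {L : ℝ} {V : Set (Fin d → WithTop ℝ)} {M : Matroid (Fin d)}
    (hVM : IsValuatedMatroid V M) (c : Multiset ℝ) :
    ∀ F : Set (Fin d), M.IsFlat F → Q M F (Multiset.card c + 1) →
    ∃ w ∈ V, (∀ i ∈ F, w i = ⊤) ∧ w ≠ ⊤ ∧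
      ∀ x : ℝ, c.count x + 1 ≤ (Afin L w x).card := by
  classical
  induction c using Multiset.induction_on with
  | empty =>
    intro F hF hQ
    obtain ⟨w, hwV, hwsupp⟩ := hVM.flat_support F hF
    refine ⟨w, hwV, ?_, ?_, ?_⟩
    · intro i hi
      have : i ∈ {i | w i = ⊤} := hwsupp ▸ hi
      exact this
    · intro h
      apply Q.ne_univ hF hQ (by omega)
      rw [hwsupp, h]
      ext i
      simp
    · intro x
      simpa using Finset.card_pos.2 (afin_nonempty hd w x)
  | cons x₀ t ih =>
    intro F hF hQ
    have hQt : Q M F (Multiset.card t + 1) :=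
      hQ.mono (by simp only [Multiset.card_cons]; omega)
    obtain ⟨w0, hw0V, hw0F, hw0top, hw0cnt⟩ := ih F hF hQt
    by_cases hsp : ∃ w' ∈ V, (∀ i ∈ F, w' i = ⊤) ∧ w' ≠ ⊤ ∧
        (∀ x : ℝ, t.count x + 1 ≤ (Afin L w' x).card) ∧ Afin L w' x₀ ≠ Afin L w0 x₀
    · obtain ⟨w', hw'V, hw'F, hw'top, hw'cnt, hne⟩ := hsp
      obtain ⟨a0, ha0⟩ := WithTop.ne_top_iff_exists.1 (loopEval_ne_top hw0top x₀)
      obtain ⟨a', ha'⟩ := WithTop.ne_top_iff_exists.1 (loopEval_ne_top hw'top x₀)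
      set w'' := fun i => w' i + ((a0 - a' : ℝ) : WithTop ℝ) with hw''def
      have hw''V : w'' ∈ V := hVM.add_mem w' hw'V _
      have hev'' : loopEval L w'' x₀ = loopEval L w0 x₀ := by
        rw [hw''def, loopEval_add, ← ha', ← ha0, ← WithTop.coe_add]
        congr 1
        ring
      have hAfin'' : ∀ x : ℝ, Afin L w'' x = Afin L w' x := fun x => afin_add w' x _
      set h := fun i => min (w0 i) (w'' i) with hhdef
      have hhV : h ∈ V := hVM.inf_mem w0 hw0V w'' hw''V
      have hhF : ∀ i ∈ F, h i = ⊤ := by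
        intro i hi
        have h1 : w'' i = ⊤ := by rw [hw''def]; simp [hw'F i hi]
        simp [hhdef, hw0F i hi, h1]
      have hhtop : h ≠ ⊤ := by
        obtain ⟨k, hk⟩ := exists_ne_top hw0top
        intro hcon
        have h0 : h k = ⊤ := by rw [hcon]; rfl
        rw [hhdef] at h0
        have := (le_min_iff.1 (le_of_eq h0.symm)).1
        exact hk (top_le_iff.1 this)
      refine ⟨h, hhV, hhF, hhtop, ?_⟩
      intro x
      by_cases hx : x = x₀
      · subst hx
        rw [Multiset.count_cons_self]
        have hsub0 : Afin L w0 x ⊆ Afin L h x := afin_min_left hev''.ge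
        have hsub' : Afin L w'' x ⊆ Afin L h x := afin_min_right hev''.le
        have hunion : Afin L w0 x ∪ Afin L w'' x ⊆ Afin L h x :=
          Finset.union_subset hsub0 hsub'
        have hcard : t.count x + 2 ≤ (Afin L w0 x ∪ Afin L w'' x).card := by
          rw [hAfin'' x]
          exact card_union_of_ne hne.symm (hw0cnt x) (hw'cnt x)
        have := Finset.card_le_card hunion
        omega
      · rw [Multiset.count_cons_of_ne hx]
        rcases le_total (loopEval L w0 x) (loopEval L w'' x) with hle | hle
        · exact le_trans (hw0cnt x) (Finset.card_le_card (afin_min_left hle))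
        · calc t.count x + 1 ≤ (Afin L w' x).card := hw'cnt x
            _ = (Afin L w'' x).card := by rw [hAfin'' x]
            _ ≤ (Afin L h x).card := Finset.card_le_card (afin_min_right hle)
    · push_neg at hsp
      obtain ⟨kstar, hkstar⟩ := afin_nonempty hd w0 x₀
      have hkstar_top : w0 kstar ≠ ⊤ := by
        intro hcon
        have h1 := mem_Afin.1 hkstar
        rw [hcon, top_add] at h1
        exact loopEval_ne_top hw0top x₀ h1.symm
      have hkstarF : kstar ∉ F := fun hin => hkstar_top (hw0F kstar hin)
      set F' := M.closure (insert kstar F) with hF'def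
      have hF' : M.IsFlat F' := flat_closure' M _
      have hQ' : Q M F' (Multiset.card t + 1) := by
        have h1 := hQ.step kstar
        rw [Multiset.card_cons] at h1
        simpa using h1
      obtain ⟨wh, hwhV, hwhF', hwhtop, hwhcnt⟩ := ih F' hF' hQ'
      have hFF' : F ⊆ F' := by
        intro i hi
        exact M.subset_closure (insert kstar F)
          (by rw [hVM.ground]; exact Set.subset_univ _) (Set.mem_insert_of_mem _ hi)
      have heq : Afin L wh x₀ = Afin L w0 x₀ :=
        hsp wh hwhV (fun i hi => hwhF' i (hFF' hi)) hwhtop hwhcnt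
      have hkstarF' : kstar ∈ F' :=
        M.subset_closure (insert kstar F)
          (by rw [hVM.ground]; exact Set.subset_univ _) (Set.mem_insert _ _)
      have hwh_kstar : wh kstar = ⊤ := hwhF' kstar hkstarF'
      have hmem : kstar ∈ Afin L wh x₀ := heq ▸ hkstar
      have h2 := mem_Afin.1 hmem
      rw [hwh_kstar, top_add] at h2
      exact absurd h2.symm (loopEval_ne_top hwhtop x₀)

end LoopAux

open LoopAux

/-- Loop theorem: for a valuated matroid `(V, M)` of rank `r + 1` on `Fin d` and any effective
divisor `D' = Σ m(x)·x` of degree `r` on the circle `[0, L)` with base point `v = 0`, there is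
a valuated covector `w ∈ V`, not identically `∞`, such that
`d·v + div(min_k (w k + φ_k)) − D' ≥ 0`; conditions (a) and (b) below express this
effectivity at the base point and at the other points in terms of the argmin sets `A_w(x)`
and the left and right slopes. -/
theorem loop_matroidal_rank (d r : ℕ) (hd : 1 ≤ d) (L : ℝ) (hL : 0 < L)
    (V : Set (Fin d → WithTop ℝ)) (M : Matroid (Fin d))
    (hVM : IsValuatedMatroid V M) (hrank : ∀ B, M.IsBase B → B.ncard = r + 1)
    (m : ℝ →₀ ℕ) (hsupp : ↑m.support ⊆ Set.Ico (0 : ℝ) L)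
    (hsum : ∑ x ∈ m.support, m x = r) :
    ∃ w ∈ V, w ≠ (⊤ : Fin d → WithTop ℝ) ∧
      (∀ x ∈ Set.Icc (0 : ℝ) L, loopEval L w x ≠ ⊤ ∧ (loopArgSet L w x).Nonempty) ∧
      m 0 ≤ sSup (loopArgSet L w 0) - sInf (loopArgSet L w 0) ∧
      ∀ x : ℝ, 0 < x → x < L →
        (m x : ℤ) ≤ sSup {s : ℤ | ∃ k ∈ loopArgSet L w x, s = leftSlope d L k x} -
          sInf {s : ℤ | ∃ k ∈ loopArgSet L w x, s = rightSlope d L k x} := by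
  classical
  have hd0 : 0 < d := hd
  set c : Multiset ℝ := Finsupp.toMultiset m with hcdef
  have hcard : Multiset.card c = r := by
    rw [hcdef, Finsupp.card_toMultiset]
    simpa [Finsupp.sum] using hsum
  have hcount : ∀ x : ℝ, c.count x = m x := fun x => Finsupp.count_toMultiset m x
  have hQ0 : Q M (M.closure ∅) (Multiset.card c + 1) := by
    rw [hcard]
    exact Q_init hVM.ground hrank
  obtain ⟨w, hwV, hwF, hwtop, hwcnt⟩ :=
    key hd0 (L := L) hVM c (M.closure ∅) (flat_closure' M _) hQ0
  have hwcnt' : ∀ x : ℝ, m x + 1 ≤ (Afin L w x).card := by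
    intro x
    have := hwcnt x
    rwa [hcount x] at this
  refine ⟨w, hwV, hwtop, ?_, ?_, ?_⟩
  · intro x _
    refine ⟨loopEval_ne_top hwtop x, ?_⟩
    obtain ⟨k, hk⟩ := afin_nonempty hd0 w x
    rw [argSet_eq w x]
    exact ⟨(k : ℕ), Finset.mem_coe.2 (Finset.mem_image_of_mem _ hk)⟩
  · -- (a) at the base point
    set N := (Afin L w 0).image Fin.val with hNdef
    have hNne : N.Nonempty := (afin_nonempty hd0 w 0).image _
    rw [argSet_eq w 0, ← hNdef, hNne.csSup_eq_max', hNne.csInf_eq_min']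
    have hNcard : m 0 + 1 ≤ N.card := by
      rw [hNdef, Finset.card_image_of_injective _ Fin.val_injective]
      exact hwcnt' 0
    have hsub : N ⊆ Finset.Icc (N.min' hNne) (N.max' hNne) := fun n hn =>
      Finset.mem_Icc.2 ⟨Finset.min'_le _ _ hn, Finset.le_max' _ _ hn⟩
    have h1 : N.card ≤ N.max' hNne + 1 - N.min' hNne := by
      rw [← Nat.card_Icc]
      exact Finset.card_le_card hsub
    have h2 : N.min' hNne ≤ N.max' hNne := N.min'_le _ (N.max'_mem hNne)
    omega
  · -- (b) at interior points
    intro x hx0 hxL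
    set N := (Afin L w x).image Fin.val with hNdef
    have hNne : N.Nonempty := (afin_nonempty hd0 w x).image _
    have hNd : ∀ n ∈ N, n < d := by
      intro n hn
      obtain ⟨k, _, rfl⟩ := Finset.mem_image.1 hn
      exact k.isLt
    have hNcard : m x + 1 ≤ N.card := by
      rw [hNdef, Finset.card_image_of_injective _ Fin.val_injective]
      exact hwcnt' x
    obtain ⟨k₁, hk₁, k₂, hk₂, hgap⟩ := slope_gap (L := L) (x := x) N hNd hNcard
    have hSl : {s : ℤ | ∃ k ∈ loopArgSet L w x, s = leftSlope d L k x} =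
        ↑(N.image (fun k => leftSlope d L k x)) := by
      ext s
      constructor
      · rintro ⟨k, hk, rfl⟩
        rw [argSet_eq w x] at hk
        exact Finset.mem_coe.2 (Finset.mem_image_of_mem _ (Finset.mem_coe.1 hk))
      · intro hs
        obtain ⟨n, hn, rfl⟩ := Finset.mem_image.1 (Finset.mem_coe.1 hs)
        exact ⟨n, by rw [argSet_eq w x]; exact Finset.mem_coe.2 hn, rfl⟩
    have hSr : {s : ℤ | ∃ k ∈ loopArgSet L w x, s = rightSlope d L k x} =
        ↑(N.image (fun k => rightSlope d L k x)) := by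
      ext s
      constructor
      · rintro ⟨k, hk, rfl⟩
        rw [argSet_eq w x] at hk
        exact Finset.mem_coe.2 (Finset.mem_image_of_mem _ (Finset.mem_coe.1 hk))
      · intro hs
        obtain ⟨n, hn, rfl⟩ := Finset.mem_image.1 (Finset.mem_coe.1 hs)
        exact ⟨n, by rw [argSet_eq w x]; exact Finset.mem_coe.2 hn, rfl⟩
    have hNlne : (N.image (fun k => leftSlope d L k x)).Nonempty := hNne.image _
    have hNrne : (N.image (fun k => rightSlope d L k x)).Nonempty := hNne.image _
    rw [hSl, hSr, hNlne.csSup_eq_max', hNrne.csInf_eq_min']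
    have h1 : leftSlope d L k₁ x ≤ (N.image (fun k => leftSlope d L k x)).max' hNlne :=
      Finset.le_max' (N.image (fun k => leftSlope d L k x)) (leftSlope d L k₁ x)
        (Finset.mem_image_of_mem _ hk₁)
    have h2 : (N.image (fun k => rightSlope d L k x)).min' hNrne ≤ rightSlope d L k₂ x :=
      Finset.min'_le (N.image (fun k => rightSlope d L k x)) (rightSlope d L k₂ x)
        (Finset.mem_image_of_mem _ hk₂)
    linarith
end

section
/- (Every loopless matroid is the local matroid of a matroidal linear series at a nondegenerate divisor on an interval; concrete form of the paper's theorem "every matroid is a local matroid".) Let d ≥ 1 be a natural number, L > 0 a real number, and c : Fin (d+1) → ℝ a function satisfying 0 < c(d−1) − c(d), c(j) − c(j+1) < c(j−1) − c(j) for all 1 ≤ j ≤ d−1, and c(0) − c(1) < L. Set x_j = c(j) − c(j+1) for 0 ≤ j ≤ d−1, so that 0 < x_{d−1} < ⋯ < x_0 < L, and define the open intervals I_d = (0, x_{d−1}), I_j = (x_j, x_{j−1}) for 1 ≤ j ≤ d−1, and I_0 = (x_0, L). Let M be a loopless matroid on Fin (d+1) with ground set univ, and let Trop(M) be the tropical span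 of the functions e_F : Fin (d+1) → ℝ ∪ {∞} for F a flat of M, where e_F(i) = ∞ if i ∈ F and e_F(i) = 0 otherwise. For b ∈ Trop(M) not identically ∞, define ψ_b : [0, L] → ℝ by ψ_b(x) = min_j (c(j) + b(j) + j·x) − min_j (c(j) + j·x), let m(b) ⊆ [0, L] be the set of points where ψ_b attains its minimum over [0, L], and let F(b) = { j ∈ Fin (d+1) : I_j is not contained in m(b) }. Then { F(b) : b ∈ Trop(M), b not identically ∞ } ∪ { univ } is exactly the set of flats of M. -/
open Classical

/-- The tropical indicator function `e_F` of a subset `F`: `∞` on `F` and `0` off `F`. -/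
noncomputable def indFun {X : Type*} (F : Set X) : X → WithTop ℝ :=
  fun i => if i ∈ F then (⊤ : WithTop ℝ) else 0

/-- `cval c j` is `c j` for `0 ≤ j ≤ d` (clamped at `d`). -/
noncomputable def cval {d : ℕ} (c : Fin (d + 1) → ℝ) (j : ℕ) : ℝ :=
  c ⟨min j d, Nat.lt_succ_of_le (min_le_right j d)⟩

/-- `xpt c j = c j − c (j+1)`, the point `x_j` of the interval. -/
noncomputable def xpt {d : ℕ} (c : Fin (d + 1) → ℝ) (j : ℕ) : ℝ := cval c j - cval c (j + 1)

/-- The open intervals `I_d = (0, x_{d−1})`, `I_j = (x_j, x_{j−1})` for `1 ≤ j ≤ d−1`, and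
`I_0 = (x_0, L)`. -/
noncomputable def intervalI {d : ℕ} (L : ℝ) (c : Fin (d + 1) → ℝ) (j : Fin (d + 1)) : Set ℝ :=
  if (j : ℕ) = d then Set.Ioo 0 (xpt c (d - 1))
  else if (j : ℕ) = 0 then Set.Ioo (xpt c 0) L
  else Set.Ioo (xpt c (j : ℕ)) (xpt c ((j : ℕ) - 1))

/-- `ψ_b(x) = min_j (c j + b j + j·x) − min_j (c j + j·x)`; for `b` not identically `∞` the
first minimum is finite, so `ψ_b` is real-valued. -/
noncomputable def psiFun {d : ℕ} (c : Fin (d + 1) → ℝ) (b : Fin (d + 1) → WithTop ℝ)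
    (x : ℝ) : ℝ :=
  WithTop.untopD 0 (Finset.univ.inf fun j : Fin (d + 1) =>
      ((c j : ℝ) : WithTop ℝ) + b j + ((((j : ℕ) : ℝ) * x : ℝ) : WithTop ℝ)) -
    Finset.univ.inf' Finset.univ_nonempty
      (fun j : Fin (d + 1) => c j + ((j : ℕ) : ℝ) * x)

lemma cval_coe {d : ℕ} (c : Fin (d + 1) → ℝ) (j : Fin (d + 1)) : cval c (j : ℕ) = c j := by
  unfold cval
  congr 1
  exact Fin.ext (by simp [Nat.min_eq_left (Nat.lt_succ_iff.mp j.isLt)])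

section Interval

variable {d : ℕ} (hd : 1 ≤ d) {L : ℝ} (hL : 0 < L) (c : Fin (d + 1) → ℝ)
    (h1 : 0 < cval c (d - 1) - cval c d)
    (h2 : ∀ j : ℕ, 1 ≤ j → j ≤ d - 1 →
      cval c j - cval c (j + 1) < cval c (j - 1) - cval c j)
    (h3 : cval c 0 - cval c 1 < L)

include h2 in
lemma xpt_step : ∀ j : ℕ, 1 ≤ j → j ≤ d - 1 → xpt c j < xpt c (j - 1) := by
  intro j hj1 hj2
  have := h2 j hj1 hj2
  unfold xpt
  have : j - 1 + 1 = j := by omega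
  rw [this]
  exact h2 j hj1 hj2

include h2 in
lemma xpt_mono : ∀ j : ℕ, j ≤ d - 1 → ∀ i : ℕ, i ≤ j → xpt c j ≤ xpt c i := by
  intro j
  induction j with
  | zero => intro _ i hi; interval_cases i; exact le_rfl
  | succ n ih =>
    intro hj i hi
    rcases Nat.eq_or_lt_of_le hi with h | h
    · rw [h]
    · have hstep := xpt_step c h2 (n + 1) (by omega) hj
      have : (n + 1) - 1 = n := by omega
      rw [this] at hstep
      exact le_trans hstep.le (ih (by omega) i (by omega))

include hd h1 h2 in
lemma xpt_pos : ∀ j : ℕ, j ≤ d - 1 → 0 < xpt c j := by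
  intro j hj
  have hbase : 0 < xpt c (d - 1) := by
    unfold xpt
    have : d - 1 + 1 = d := by omega
    rw [this]; exact h1
  exact lt_of_lt_of_le hbase (xpt_mono c h2 (d-1) le_rfl j hj)

include h2 h3 in
lemma xpt_lt_L : ∀ j : ℕ, j ≤ d - 1 → xpt c j < L := by
  intro j hj
  have : xpt c j ≤ xpt c 0 := xpt_mono c h2 j hj 0 (Nat.zero_le j)
  have h0 : xpt c 0 = cval c 0 - cval c 1 := rfl
  linarith

include hd h1 h2 h3 hL in
lemma interval_bounds {j : Fin (d + 1)} {x : ℝ} (hx : x ∈ intervalI L c j) :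
    (∀ i : ℕ, (j : ℕ) ≤ i → i ≤ d - 1 → xpt c i < x) ∧
    (∀ i : ℕ, i + 1 ≤ (j : ℕ) → x < xpt c i) ∧ (0 < x ∧ x < L) := by
  unfold intervalI at hx
  by_cases hjd : (j : ℕ) = d
  · rw [if_pos hjd] at hx
    obtain ⟨hx1, hx2⟩ := hx
    refine ⟨fun i hi1 hi2 => by omega, fun i hi => ?_, hx1, ?_⟩
    · exact lt_of_lt_of_le hx2 (xpt_mono c h2 (d-1) le_rfl i (by omega))
    · exact lt_trans hx2 (xpt_lt_L c h2 h3 (d-1) le_rfl)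
  · rw [if_neg hjd] at hx
    by_cases hj0 : (j : ℕ) = 0
    · rw [if_pos hj0] at hx
      obtain ⟨hx1, hx2⟩ := hx
      refine ⟨fun i hi1 hi2 => lt_of_le_of_lt (xpt_mono c h2 i hi2 0 (Nat.zero_le i)) hx1,
        fun i hi => by omega, ?_, hx2⟩
      exact lt_trans (xpt_pos hd c h1 h2 0 (by omega)) hx1
    · rw [if_neg hj0] at hx
      obtain ⟨hx1, hx2⟩ := hx
      have hjle : (j : ℕ) ≤ d - 1 := by have := j.isLt; omega
      refine ⟨fun i hi1 hi2 => lt_of_le_of_lt (xpt_mono c h2 i hi2 (j:ℕ) hi1) hx1,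
        fun i hi => lt_of_lt_of_le hx2 (xpt_mono c h2 ((j:ℕ) - 1) (by omega) i (by omega)), ?_, ?_⟩
      · exact lt_trans (xpt_pos hd c h1 h2 (j:ℕ) hjle) hx1
      · exact lt_trans hx2 (xpt_lt_L c h2 h3 ((j:ℕ)-1) (by omega))

include hd h1 h2 h3 hL in
lemma interval_nonempty (j : Fin (d + 1)) : (intervalI L c j).Nonempty := by
  unfold intervalI
  by_cases hjd : (j : ℕ) = d
  · rw [if_pos hjd]
    exact Set.nonempty_Ioo.2 (xpt_pos hd c h1 h2 (d-1) le_rfl)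
  · rw [if_neg hjd]
    by_cases hj0 : (j : ℕ) = 0
    · rw [if_pos hj0]
      exact Set.nonempty_Ioo.2 (xpt_lt_L c h2 h3 0 (by omega))
    · rw [if_neg hj0]
      have hjle : (j : ℕ) ≤ d - 1 := by have := j.isLt; omega
      exact Set.nonempty_Ioo.2 (xpt_step c h2 (j:ℕ) (by omega) hjle)

lemma telescope (x : ℝ) : ∀ m n : ℕ, m ≤ n →
    cval c n + n * x = cval c m + m * x + ∑ i ∈ Finset.Ico m n, (x - xpt c i) := by
  intro m n hmn
  induction n with
  | zero => interval_cases m; simp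
  | succ n ih =>
    rcases Nat.eq_or_lt_of_le hmn with h | h
    · rw [← h]; simp
    · have hmn' : m ≤ n := by omega
      rw [Finset.sum_Ico_succ_top hmn']
      have hstep : cval c (n+1) + ((n+1:ℕ):ℝ)*x = cval c n + (n:ℝ)*x + (x - xpt c n) := by
        unfold xpt; push_cast; ring
      rw [hstep, ih hmn']
      ring

include hd h1 h2 h3 hL in
lemma strict_min {j : Fin (d + 1)} {x : ℝ} (hx : x ∈ intervalI L c j)
    {k : Fin (d + 1)} (hk : k ≠ j) : c j + (j : ℕ) * x < c k + (k : ℕ) * x := by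
  obtain ⟨hlow, hhigh, hx0, hxL⟩ := interval_bounds hd hL c h1 h2 h3 hx
  have hkd : (k : ℕ) ≤ d := Nat.lt_succ_iff.mp k.isLt
  have hjd : (j : ℕ) ≤ d := Nat.lt_succ_iff.mp j.isLt
  rcases lt_or_gt_of_ne (fun h => hk (Fin.ext h) : (k:ℕ) ≠ (j:ℕ)) with h | h
  · -- k < j : c j + jx - (c k + kx) = ∑_{i ∈ Ico k j} (x - xpt i) < 0
    have ht := telescope c x (k : ℕ) (j : ℕ) h.le
    rw [cval_coe, cval_coe] at ht
    have hsum : ∑ i ∈ Finset.Ico (k:ℕ) (j:ℕ), (x - xpt c i) < 0 := by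
      apply Finset.sum_neg
      · intro i hi
        rw [Finset.mem_Ico] at hi
        have := hhigh i (by omega)
        linarith
      · exact Finset.nonempty_Ico.2 h
    linarith
  · have ht := telescope c x (j : ℕ) (k : ℕ) h.le
    rw [cval_coe, cval_coe] at ht
    have hsum : 0 < ∑ i ∈ Finset.Ico (j:ℕ) (k:ℕ), (x - xpt c i) := by
      apply Finset.sum_pos
      · intro i hi
        rw [Finset.mem_Ico] at hi
        have := hlow i (by omega) (by omega)
        linarith
      · exact Finset.nonempty_Ico.2 h
    linarith

include hd h1 h2 h3 hL in
lemma inf'_eq {j : Fin (d + 1)} {x : ℝ} (hx : x ∈ intervalI L c j) :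
    Finset.univ.inf' Finset.univ_nonempty (fun k : Fin (d+1) => c k + ((k:ℕ):ℝ) * x)
      = c j + ((j:ℕ):ℝ) * x := by
  apply le_antisymm
  · exact Finset.inf'_le _ (Finset.mem_univ j)
  · apply Finset.le_inf'
    intro k _
    by_cases hk : k = j
    · rw [hk]
    · exact (strict_min hd hL c h1 h2 h3 hx hk).le

end Interval


lemma Fb_eq {d : ℕ} (hd : 1 ≤ d) {L : ℝ} (hL : 0 < L) (c : Fin (d + 1) → ℝ)
    (h1 : 0 < cval c (d - 1) - cval c d)
    (h2 : ∀ j : ℕ, 1 ≤ j → j ≤ d - 1 →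
      cval c j - cval c (j + 1) < cval c (j - 1) - cval c j)
    (h3 : cval c 0 - cval c 1 < L)
    (b : Fin (d + 1) → WithTop ℝ) (hb : b ≠ (⊤ : Fin (d + 1) → WithTop ℝ)) :
    { j : Fin (d + 1) | ¬ intervalI L c j ⊆
        { x ∈ Set.Icc (0 : ℝ) L |
          ∀ y ∈ Set.Icc (0 : ℝ) L, psiFun c b x ≤ psiFun c b y } }
      = { j : Fin (d + 1) | b j ≠ Finset.univ.inf b } := by
  obtain ⟨j0, hj0⟩ : ∃ j, b j ≠ ⊤ := by
    by_contra h
    push_neg at h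
    exact hb (funext fun j => h j)
  set B := Finset.univ.inf b with hBdef
  have hBle : ∀ j, B ≤ b j := fun j => Finset.inf_le (Finset.mem_univ j)
  have hBne : B ≠ ⊤ := fun h => hj0 (top_le_iff.mp (h ▸ hBle j0))
  obtain ⟨β, hβ⟩ := WithTop.ne_top_iff_exists.mp hBne
  set T : ℝ → WithTop ℝ := fun x => Finset.univ.inf fun k : Fin (d + 1) =>
      ((c k : ℝ) : WithTop ℝ) + b k + ((((k : ℕ) : ℝ) * x : ℝ) : WithTop ℝ) with hTdef
  set G : ℝ → ℝ := fun x => Finset.univ.inf' Finset.univ_nonempty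
      (fun j : Fin (d + 1) => c j + ((j : ℕ) : ℝ) * x) with hGdef
  have hpsi : ∀ x, psiFun c b x = WithTop.untopD 0 (T x) - G x := fun x => rfl
  have hterm : ∀ (k : Fin (d+1)) (x : ℝ),
      ((c k : ℝ) : WithTop ℝ) + b k + ((((k : ℕ) : ℝ) * x : ℝ) : WithTop ℝ)
        = ((c k + ((k:ℕ):ℝ) * x : ℝ) : WithTop ℝ) + b k := by
    intro k x
    rw [WithTop.coe_add, add_right_comm]
  have hTne : ∀ x, T x ≠ ⊤ := by
    intro x h
    have hle : T x ≤ ((c j0 + ((j0:ℕ):ℝ) * x : ℝ) : WithTop ℝ) + b j0 := by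
      rw [← hterm]; exact Finset.inf_le (Finset.mem_univ j0)
    rw [h, top_le_iff, WithTop.add_eq_top] at hle
    rcases hle with h' | h'
    · exact WithTop.coe_ne_top h'
    · exact hj0 h'
  have hA : ∀ x : ℝ, ((G x + β : ℝ) : WithTop ℝ) ≤ T x := by
    intro x
    apply Finset.le_inf
    intro k _
    rw [hterm, WithTop.coe_add]
    exact add_le_add (WithTop.coe_le_coe.2 (Finset.inf'_le _ (Finset.mem_univ k)))
      (hβ ▸ hBle k)
  have hlower : ∀ x : ℝ, β ≤ psiFun c b x := by
    intro x
    obtain ⟨t, ht⟩ := WithTop.ne_top_iff_exists.mp (hTne x)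
    have := hA x
    rw [← ht, WithTop.coe_le_coe] at this
    rw [hpsi, ← ht, WithTop.untopD_coe]
    linarith
  have hattain : ∃ js, b js = B := by
    by_contra h
    push_neg at h
    have : B < B := (Finset.lt_inf_iff (lt_top_iff_ne_top.2 hBne)).mpr
      (fun j _ => lt_of_le_of_ne (hBle j) (fun he => h j he.symm))
    exact lt_irrefl _ this
  have hpsi_eq : ∀ (j : Fin (d+1)) (x : ℝ), x ∈ intervalI L c j → b j = B →
      psiFun c b x = β := by
    intro j x hx hbj
    have hG : G x = c j + ((j:ℕ):ℝ) * x := inf'_eq hd hL c h1 h2 h3 hx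
    have hup : T x ≤ ((c j + ((j:ℕ):ℝ) * x + β : ℝ) : WithTop ℝ) := by
      refine le_trans (Finset.inf_le (Finset.mem_univ j)) (le_of_eq ?_)
      rw [hterm, hbj, ← hβ, ← WithTop.coe_add]
    have hdown := hA x
    rw [hG] at hdown
    have hTx : T x = ((c j + ((j:ℕ):ℝ) * x + β : ℝ) : WithTop ℝ) :=
      le_antisymm hup hdown
    rw [hpsi, hTx, WithTop.untopD_coe, hG]
    ring
  have hpsi_gt : ∀ (j : Fin (d+1)) (x : ℝ), x ∈ intervalI L c j → b j ≠ B →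
      β < psiFun c b x := by
    intro j x hx hbj
    have hG : G x = c j + ((j:ℕ):ℝ) * x := inf'_eq hd hL c h1 h2 h3 hx
    have hlt : ((c j + ((j:ℕ):ℝ) * x + β : ℝ) : WithTop ℝ) < T x := by
      rw [hTdef]
      rw [Finset.lt_inf_iff (WithTop.coe_lt_top _)]
      intro k _
      rw [hterm]
      by_cases hk : k = j
      · subst hk
        have hblt : ((β : ℝ) : WithTop ℝ) < b k := lt_of_le_of_ne (hβ ▸ hBle k)
          (fun he => hbj (hβ ▸ he.symm))
        calc ((c k + ((k:ℕ):ℝ) * x + β : ℝ) : WithTop ℝ)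
            = ((c k + ((k:ℕ):ℝ) * x : ℝ) : WithTop ℝ) + ((β:ℝ) : WithTop ℝ) := by
              rw [← WithTop.coe_add]
          _ < ((c k + ((k:ℕ):ℝ) * x : ℝ) : WithTop ℝ) + b k :=
              WithTop.add_lt_add_left (WithTop.coe_ne_top) hblt
      · have hsm := strict_min hd hL c h1 h2 h3 hx hk
        calc ((c j + ((j:ℕ):ℝ) * x + β : ℝ) : WithTop ℝ)
            < ((c k + ((k:ℕ):ℝ) * x + β : ℝ) : WithTop ℝ) := by
              exact_mod_cast by linarith
          _ = ((c k + ((k:ℕ):ℝ) * x : ℝ) : WithTop ℝ) + ((β:ℝ) : WithTop ℝ) := by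
              rw [← WithTop.coe_add]
          _ ≤ ((c k + ((k:ℕ):ℝ) * x : ℝ) : WithTop ℝ) + b k :=
              add_le_add le_rfl (hβ ▸ hBle k)
    obtain ⟨t, ht⟩ := WithTop.ne_top_iff_exists.mp (hTne x)
    rw [← ht, WithTop.coe_lt_coe] at hlt
    rw [hpsi, ← ht, WithTop.untopD_coe, hG]
    linarith
  obtain ⟨js, hjs⟩ := hattain
  obtain ⟨xs, hxs⟩ := interval_nonempty hd hL c h1 h2 h3 js
  have hxsIcc : xs ∈ Set.Icc (0:ℝ) L := by
    obtain ⟨_, _, hx0, hxL⟩ := interval_bounds hd hL c h1 h2 h3 hxs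
    exact ⟨hx0.le, hxL.le⟩
  have hψxs : psiFun c b xs = β := hpsi_eq js xs hxs hjs
  ext j
  simp only [Set.mem_setOf_eq]
  constructor
  · intro hns
    by_contra hbj
    apply hns
    intro x hxI
    obtain ⟨_, _, hx0, hxL⟩ := interval_bounds hd hL c h1 h2 h3 hxI
    refine ⟨⟨hx0.le, hxL.le⟩, fun y hy => ?_⟩
    rw [hpsi_eq j x hxI hbj]
    exact hlower y
  · intro hbj hsub
    obtain ⟨x, hxI⟩ := interval_nonempty hd hL c h1 h2 h3 j
    have hxS := hsub hxI
    have h1' := hxS.2 xs hxsIcc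
    have h2' := hpsi_gt j x hxI hbj
    rw [hψxs] at h1'
    linarith


/-- Every loopless matroid is the local matroid of a matroidal linear series at a
nondegenerate divisor on an interval: with `c` chosen as in the statement (so that the divisor
`D = div(min_j (c j + j·x)) + d·0` is nondegenerate on `[0, L]`), the sets `F(b)` for
`b ∈ Trop(M)` not identically `∞`, together with `univ`, are exactly the flats of `M`. -/
theorem every_loopless_matroid_is_local (d : ℕ) (hd : 1 ≤ d) (L : ℝ) (hL : 0 < L)
    (c : Fin (d + 1) → ℝ)
    (h1 : 0 < cval c (d - 1) - cval c d)
    (h2 : ∀ j : ℕ, 1 ≤ j → j ≤ d - 1 →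
      cval c j - cval c (j + 1) < cval c (j - 1) - cval c j)
    (h3 : cval c 0 - cval c 1 < L)
    (M : Matroid (Fin (d + 1))) (hground : M.E = Set.univ) (hloopless : M.IsFlat ∅) :
    { F : Set (Fin (d + 1)) |
        ∃ b ∈ tropSpan { g | ∃ Fl, M.IsFlat Fl ∧ g = indFun Fl },
          b ≠ (⊤ : Fin (d + 1) → WithTop ℝ) ∧
          F = { j : Fin (d + 1) | ¬ intervalI L c j ⊆
            { x ∈ Set.Icc (0 : ℝ) L |
              ∀ y ∈ Set.Icc (0 : ℝ) L, psiFun c b x ≤ psiFun c b y } } }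
      ∪ {Set.univ} = { F | M.IsFlat F } := by
  ext F
  simp only [Set.mem_union, Set.mem_setOf_eq, Set.mem_singleton_iff]
  constructor
  · rintro (⟨b, hbspan, hbne, hFeq⟩ | rfl)
    · rw [Fb_eq hd hL c h1 h2 h3 b hbne] at hFeq
      obtain ⟨n, φ, a, hφ, hbdef⟩ := hbspan
      choose Fl hFl hφeq using hφ
      have hbj : ∀ j, b j = Finset.univ.inf (fun k => indFun (Fl k) j + a k) := by
        intro j
        rw [hbdef]
        exact Finset.inf_congr rfl (fun k _ => by rw [hφeq k])
      obtain ⟨j0, hj0⟩ : ∃ j, b j ≠ ⊤ := by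
        by_contra h
        push_neg at h
        exact hbne (funext fun j => h j)
      set B := Finset.univ.inf b with hBdef
      have hBle : ∀ j, B ≤ b j := fun j => Finset.inf_le (Finset.mem_univ j)
      have hBne : B ≠ ⊤ := fun h => hj0 (top_le_iff.mp (h ▸ hBle j0))
      have hext : ∀ j, b j = B → ∃ k, j ∉ Fl k ∧ a k = B := by
        intro j hj
        by_contra h
        push_neg at h
        have hlt : B < Finset.univ.inf (fun k => indFun (Fl k) j + a k) := by
          rw [Finset.lt_inf_iff (lt_top_iff_ne_top.2 hBne)]
          intro k _
          by_cases hk : j ∈ Fl k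
          · simp only [indFun, if_pos hk, top_add]
            exact lt_top_iff_ne_top.2 hBne
          · have he : indFun (Fl k) j + a k = a k := by
              simp only [indFun, if_neg hk, zero_add]
            rw [he]
            have hge : B ≤ a k := by
              rw [← hj, hbj j]
              exact le_trans (Finset.inf_le (Finset.mem_univ k)) (le_of_eq he)
            exact lt_of_le_of_ne hge (fun heq => h k hk heq.symm)
        rw [← hbj j, hj] at hlt
        exact lt_irrefl _ hlt
      have hattain : ∃ js, b js = B := by
        by_contra h
        push_neg at h
        exact lt_irrefl B ((Finset.lt_inf_iff (lt_top_iff_ne_top.2 hBne)).mpr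
          (fun j _ => lt_of_le_of_ne (hBle j) (fun he => h j he.symm)))
      obtain ⟨js, hjs⟩ := hattain
      obtain ⟨k0, hk0j, hk0a⟩ := hext js hjs
      haveI : Nonempty {k : Fin n // a k = B} := ⟨⟨k0, hk0a⟩⟩
      have hFinter : F = ⋂ (k : {k : Fin n // a k = B}), Fl k.1 := by
        rw [hFeq]
        ext j
        simp only [Set.mem_iInter, Set.mem_setOf_eq, Subtype.forall]
        constructor
        · intro hbne' k hak
          by_contra hjk
          apply hbne'
          refine le_antisymm ?_ (hBle j)
          rw [hbj j, ← hak]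
          refine le_trans (Finset.inf_le (Finset.mem_univ k)) (le_of_eq ?_)
          simp only [indFun, if_neg hjk, zero_add]
        · intro hall hbj'
          obtain ⟨k, hjk, hak⟩ := hext j hbj'
          exact hjk (hall k hak)
      rw [hFinter]
      exact Matroid.IsFlat.iInter (fun k => hFl k.1)
    · exact hground ▸ M.ground_isFlat
  · intro hF
    by_cases hFu : F = Set.univ
    · exact Or.inr hFu
    · left
      obtain ⟨j0, hj0F⟩ := Set.ne_univ_iff_exists_notMem F |>.mp hFu
      set b : Fin (d + 1) → WithTop ℝ :=
        fun x => Finset.univ.inf (fun k : Fin 1 => (fun _ : Fin 1 => indFun F) k x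
          + (fun _ : Fin 1 => (0 : WithTop ℝ)) k) with hbdef
      have hbsimp : ∀ x, b x = indFun F x := by
        intro x
        rw [hbdef]
        simp
      have hbne : b ≠ (⊤ : Fin (d + 1) → WithTop ℝ) := by
        intro h
        have := congrFun h j0
        rw [hbsimp j0, Pi.top_apply] at this
        simp only [indFun, if_neg hj0F] at this
        exact (WithTop.top_ne_zero) this.symm
      refine ⟨b, ⟨1, fun _ => indFun F, fun _ => 0, fun k => ⟨F, hF, rfl⟩, rfl⟩, hbne, ?_⟩
      rw [Fb_eq hd hL c h1 h2 h3 b hbne]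
      have hB0 : Finset.univ.inf b = 0 := by
        refine le_antisymm ?_ (Finset.le_inf fun j _ => ?_)
        · refine le_trans (Finset.inf_le (Finset.mem_univ j0)) ?_
          rw [hbsimp j0]
          simp [indFun, hj0F]
        · rw [hbsimp j]
          by_cases h : j ∈ F
          · simp [indFun, h]
          · simp [indFun, h]
      ext j
      simp only [Set.mem_setOf_eq, hB0, hbsimp j]
      by_cases h : j ∈ F
      · simp [indFun, h]
      · simp [indFun, h]
end
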